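/- arXiv:1706.02597 — 9 statements merged into one kernel-verified Lean document; each statement's English description precedes it below -/
import Mathlib

section
/- Let g : ℝ → ℝ be nonnegative and nondecreasing on the interval [0,1], and let (a_k)_{k≥1} be a sequence of positive reals growing double-exponentially, i.e. there are constants b₁, b₂ > 0 and 1 < c₁ ≤ c₂ such that exp(b₁·c₁^k) ≤ a_k ≤ exp(b₂·c₂^k) for all k ≥ 1. Then the series ∑_{k=1}^∞ g(1/a_k) converges if and only if the integral ∫_0^∞ g(exp(−e^y)) dy is finite. -/
open MeasureTheory

/-- Upper bound for the integral of an antitone `ℝ≥0∞`-valued function over `Ico u v`. -/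
lemma aux_setLIntegral_Ico_le (H : ℝ → ENNReal) (hH : Antitone H) (u v : ℝ) :
    ∫⁻ y in Set.Ico u v, H y ≤ H u * ENNReal.ofReal (v - u) := by
  calc ∫⁻ y in Set.Ico u v, H y ≤ ∫⁻ _ in Set.Ico u v, H u := by
        refine setLIntegral_mono measurable_const (fun x hx => hH hx.1)
    _ = H u * ENNReal.ofReal (v - u) := by
        rw [setLIntegral_const, Real.volume_Ico]

/-- Lower bound for the integral of an antitone `ℝ≥0∞`-valued function over `Ico u v`. -/
lemma aux_le_setLIntegral_Ico (H : ℝ → ENNReal) (hH : Antitone H) (u v : ℝ) :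
    H v * ENNReal.ofReal (v - u) ≤ ∫⁻ y in Set.Ico u v, H y := by
  calc H v * ENNReal.ofReal (v - u) = ∫⁻ _ in Set.Ico u v, H v := by
        rw [setLIntegral_const, Real.volume_Ico]
    _ ≤ ∫⁻ y in Set.Ico u v, H y :=
        setLIntegral_mono hH.measurable (fun x hx => hH hx.2.le)

lemma aux_Ici_eq_iUnion (α δ : ℝ) (hδ : 0 < δ) :
    Set.Ici α = ⋃ k : ℕ, Set.Ico (α + k * δ) (α + (k + 1) * δ) := by
  ext x
  simp only [Set.mem_Ici, Set.mem_iUnion, Set.mem_Ico]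
  constructor
  · intro hx
    refine ⟨⌊(x - α) / δ⌋₊, ?_, ?_⟩
    · have h1 : (⌊(x - α) / δ⌋₊ : ℝ) ≤ (x - α) / δ :=
        Nat.floor_le (div_nonneg (by linarith) hδ.le)
      nlinarith [(le_div_iff₀ hδ).mp h1]
    · have h2 : (x - α) / δ < ⌊(x - α) / δ⌋₊ + 1 := Nat.lt_floor_add_one _
      nlinarith [(div_lt_iff₀ hδ).mp h2]
  · rintro ⟨k, hk1, _⟩
    nlinarith [k.cast_nonneg (α := ℝ)]

/-- Integral test for antitone functions on a geometric-type grid. -/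
lemma aux_integral_test (H : ℝ → ENNReal) (hH : Antitone H) (hfin : ∀ y, H y ≠ ⊤)
    (α δ : ℝ) (hδ : 0 < δ) :
    (∫⁻ y in Set.Ici α, H y) < ⊤ ↔ (∑' k : ℕ, H (α + (k + 1) * δ)) < ⊤ := by
  have hdisj : Pairwise (Function.onFun Disjoint
      (fun k : ℕ => Set.Ico (α + k * δ) (α + (k + 1) * δ))) := by
    intro i j hij
    rcases hij.lt_or_gt with h | h
    · refine Set.disjoint_left.mpr (fun x hx hx' => ?_)
      have : (i : ℝ) + 1 ≤ (j : ℝ) := by exact_mod_cast h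
      nlinarith [hx.2, hx'.1]
    · refine Set.disjoint_left.mpr (fun x hx hx' => ?_)
      have : (j : ℝ) + 1 ≤ (i : ℝ) := by exact_mod_cast h
      nlinarith [hx.1, hx'.2]
  have hsplit : (∫⁻ y in Set.Ici α, H y) =
      ∑' k : ℕ, ∫⁻ y in Set.Ico (α + k * δ) (α + (k + 1) * δ), H y := by
    rw [aux_Ici_eq_iUnion α δ hδ]
    exact lintegral_iUnion (fun k => measurableSet_Ico) hdisj H
  constructor
  · intro hint
    have hle : (∑' k : ℕ, H (α + (k + 1) * δ) * ENNReal.ofReal δ) ≤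
        ∫⁻ y in Set.Ici α, H y := by
      rw [hsplit]
      refine ENNReal.tsum_le_tsum (fun k => ?_)
      have h := aux_le_setLIntegral_Ico H hH (α + k * δ) (α + (k + 1) * δ)
      rwa [show α + ((k : ℝ) + 1) * δ - (α + k * δ) = δ from by ring] at h
    rw [ENNReal.tsum_mul_right] at hle
    exact ENNReal.lt_top_of_mul_ne_top_left (lt_of_le_of_lt hle hint).ne
      (ENNReal.ofReal_pos.mpr hδ).ne'
  · intro hsum
    have hle : (∫⁻ y in Set.Ici α, H y) ≤
        ∑' k : ℕ, H (α + k * δ) * ENNReal.ofReal δ := by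
      rw [hsplit]
      refine ENNReal.tsum_le_tsum (fun k => ?_)
      have h := aux_setLIntegral_Ico_le H hH (α + k * δ) (α + (k + 1) * δ)
      rwa [show α + ((k : ℝ) + 1) * δ - (α + k * δ) = δ from by ring] at h
    rw [ENNReal.tsum_mul_right] at hle
    have hshift := tsum_eq_zero_add' (f := fun k : ℕ => H (α + k * δ)) ENNReal.summable
    push_cast at hshift
    refine lt_of_le_of_lt hle ?_
    rw [hshift]
    exact ENNReal.mul_lt_top
      (ENNReal.add_lt_top.mpr ⟨(hfin _).lt_top, hsum⟩) ENNReal.ofReal_lt_top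
  
/-- Finiteness of the tail integral doesn't depend on the starting point. -/
lemma aux_shift (H : ℝ → ENNReal) (hH : Antitone H) (hfin : ∀ y, H y ≠ ⊤) (α β : ℝ) :
    (∫⁻ y in Set.Ici α, H y) < ⊤ ↔ (∫⁻ y in Set.Ici β, H y) < ⊤ := by
  have key : ∀ u v : ℝ, u ≤ v → (∫⁻ y in Set.Ici u, H y) < ⊤ →
      True := fun _ _ _ _ => trivial
  have main : ∀ u v : ℝ, u ≤ v →
      ((∫⁻ y in Set.Ici u, H y) < ⊤ ↔ (∫⁻ y in Set.Ici v, H y) < ⊤) := by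
    intro u v huv
    constructor
    · intro h
      exact lt_of_le_of_lt (lintegral_mono_set (Set.Ici_subset_Ici.mpr huv)) h
    · intro h
      have hunion : Set.Ici u = Set.Ico u v ∪ Set.Ici v := by
        rw [Set.Ico_union_Ici_eq_Ici huv]
      have hdisj : Disjoint (Set.Ico u v) (Set.Ici v) := by
        refine Set.disjoint_left.mpr (fun x hx hx' => absurd hx.2 (not_lt.mpr hx'))
      rw [hunion, lintegral_union measurableSet_Ici hdisj]
      refine ENNReal.add_lt_top.mpr ⟨?_, h⟩
      exact lt_of_le_of_lt (aux_setLIntegral_Ico_le H hH u v)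
        (ENNReal.mul_lt_top (hfin u).lt_top ENNReal.ofReal_lt_top)
  rcases le_total α β with h | h
  · exact main α β h
  · exact (main β α h).symm

/-- **Claim 5.3.** For `g` nonnegative and nondecreasing on `[0,1]` and a
double-exponentially growing sequence `(a_k)_{k ≥ 1}`, the series
`∑_{k ≥ 1} g(1/a_k)` converges iff `∫_0^∞ g(exp(-e^y)) dy < ∞`. -/
theorem stmt0 (g : ℝ → ℝ)
    (hg0 : ∀ x ∈ Set.Icc (0 : ℝ) 1, 0 ≤ g x)
    (hgmono : ∀ x ∈ Set.Icc (0 : ℝ) 1, ∀ y ∈ Set.Icc (0 : ℝ) 1, x ≤ y → g x ≤ g y)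
    (a : ℕ → ℝ) (b₁ b₂ c₁ c₂ : ℝ) (hb₁ : 0 < b₁) (hb₂ : 0 < b₂)
    (hc₁ : 1 < c₁) (hc₁₂ : c₁ ≤ c₂)
    (ha : ∀ k : ℕ, 1 ≤ k →
      Real.exp (b₁ * c₁ ^ k) ≤ a k ∧ a k ≤ Real.exp (b₂ * c₂ ^ k)) :
    Summable (fun k : ℕ => g (1 / a (k + 1))) ↔
      (∫⁻ y in Set.Ici (0 : ℝ), ENNReal.ofReal (g (Real.exp (-Real.exp y)))) < ⊤ := by
  have hc₂ : 1 < c₂ := lt_of_lt_of_le hc₁ hc₁₂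
  set H : ℝ → ENNReal := fun y => ENNReal.ofReal (g (Real.exp (-Real.exp y))) with hHdef
  have hmem : ∀ y : ℝ, Real.exp (-Real.exp y) ∈ Set.Icc (0 : ℝ) 1 := by
    intro y
    exact ⟨(Real.exp_pos _).le, Real.exp_le_one_iff.mpr (neg_nonpos.mpr (Real.exp_pos y).le)⟩
  have hH : Antitone H := by
    intro y z hyz
    refine ENNReal.ofReal_le_ofReal ?_
    refine hgmono _ (hmem z) _ (hmem y) ?_
    exact Real.exp_le_exp.mpr (neg_le_neg (Real.exp_le_exp.mpr hyz))
  have hfin : ∀ y, H y ≠ ⊤ := fun y => ENNReal.ofReal_ne_top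
  -- grid identity
  have hgrid : ∀ (b c : ℝ), 0 < b → 0 < c → ∀ k : ℕ,
      H (Real.log b + ((k : ℝ) + 1) * Real.log c) =
        ENNReal.ofReal (g (Real.exp (-(b * c ^ (k + 1))))) := by
    intro b c hb hc k
    have : Real.exp (Real.log b + ((k : ℝ) + 1) * Real.log c) = b * c ^ (k + 1) := by
      rw [Real.exp_add, Real.exp_log hb]
      congr 1
      rw [show ((k : ℝ) + 1) = ((k + 1 : ℕ) : ℝ) by push_cast; ring,
        Real.exp_nat_mul, Real.exp_log hc]
    rw [hHdef]
    simp only [this]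
  -- basic bounds on a (k+1)
  have hapos : ∀ k : ℕ, 0 < a (k + 1) := fun k =>
    lt_of_lt_of_le (Real.exp_pos _) (ha (k + 1) (Nat.le_add_left 1 k)).1
  have hage1 : ∀ k : ℕ, 1 ≤ a (k + 1) := by
    intro k
    refine le_trans ?_ (ha (k + 1) (Nat.le_add_left 1 k)).1
    rw [show (1 : ℝ) = Real.exp 0 by simp]
    refine Real.exp_le_exp.mpr ?_
    nlinarith [pow_pos (show (0:ℝ) < c₁ by linarith) (k+1)]
  have hamem : ∀ k : ℕ, (1 / a (k + 1)) ∈ Set.Icc (0 : ℝ) 1 := by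
    intro k
    constructor
    · exact (one_div_pos.mpr (hapos k)).le
    · rw [div_le_one (hapos k)]; exact hage1 k
  constructor
  · -- Summable → integral finite; use b₂, c₂ grid
    intro hsum
    have hδ : 0 < Real.log c₂ := Real.log_pos hc₂
    rw [show (∫⁻ y in Set.Ici (0 : ℝ), ENNReal.ofReal (g (Real.exp (-Real.exp y)))) =
      ∫⁻ y in Set.Ici (0 : ℝ), H y from rfl,
      aux_shift H hH hfin 0 (Real.log b₂),
      aux_integral_test H hH hfin _ _ hδ]
    have hcmp : ∀ k : ℕ, H (Real.log b₂ + ((k : ℝ) + 1) * Real.log c₂) ≤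
        ENNReal.ofReal (g (1 / a (k + 1))) := by
      intro k
      rw [hgrid b₂ c₂ hb₂ (by linarith) k]
      refine ENNReal.ofReal_le_ofReal ?_
      have hexmem : Real.exp (-(b₂ * c₂ ^ (k + 1))) ∈ Set.Icc (0 : ℝ) 1 :=
        ⟨(Real.exp_pos _).le, Real.exp_le_one_iff.mpr (by nlinarith [pow_pos (show (0:ℝ) < c₂ by linarith) (k+1)])⟩
      refine hgmono _ hexmem _ (hamem k) ?_
      rw [Real.exp_neg, one_div]
      exact inv_anti₀ (hapos k) (ha (k + 1) (Nat.le_add_left 1 k)).2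
    refine lt_of_le_of_lt (ENNReal.tsum_le_tsum hcmp) ?_
    rw [← ENNReal.ofReal_tsum_of_nonneg (fun k => hg0 _ (hamem k)) hsum]
    exact ENNReal.ofReal_lt_top
  · -- integral finite → Summable; use b₁, c₁ grid
    intro hint
    have hδ : 0 < Real.log c₁ := Real.log_pos hc₁
    rw [show (∫⁻ y in Set.Ici (0 : ℝ), ENNReal.ofReal (g (Real.exp (-Real.exp y)))) =
      ∫⁻ y in Set.Ici (0 : ℝ), H y from rfl,
      aux_shift H hH hfin 0 (Real.log b₁),
      aux_integral_test H hH hfin _ _ hδ] at hint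
    have hcmp : ∀ k : ℕ, ENNReal.ofReal (g (1 / a (k + 1))) ≤
        H (Real.log b₁ + ((k : ℝ) + 1) * Real.log c₁) := by
      intro k
      rw [hgrid b₁ c₁ hb₁ (by linarith) k]
      refine ENNReal.ofReal_le_ofReal ?_
      have hexmem : Real.exp (-(b₁ * c₁ ^ (k + 1))) ∈ Set.Icc (0 : ℝ) 1 :=
        ⟨(Real.exp_pos _).le, Real.exp_le_one_iff.mpr (by nlinarith [pow_pos (show (0:ℝ) < c₁ by linarith) (k+1)])⟩
      refine hgmono _ (hamem k) _ hexmem ?_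
      rw [Real.exp_neg, one_div]
      exact inv_anti₀ (Real.exp_pos _) (ha (k + 1) (Nat.le_add_left 1 k)).1
    have htsum : (∑' k : ℕ, ENNReal.ofReal (g (1 / a (k + 1)))) ≠ ⊤ :=
      (lt_of_le_of_lt (ENNReal.tsum_le_tsum hcmp) hint).ne
    have := ENNReal.summable_toReal htsum
    refine this.congr (fun k => ?_)
    exact ENNReal.toReal_ofReal (hg0 _ (hamem k))
end

section
/- Let (L_{k,j})_{k≥1, j≥1} be a doubly indexed family of independent, identically distributed nonnegative real random variables with common cumulative distribution function F, and let F^{(−1)}(q) := inf{t ∈ ℝ : F(t) ≥ q}. Let (a_k)_{k≥1} be positive integers tending to infinity such that for some c > 1 and all sufficiently large k one has a_k ≥ c·a_{k−1}. Then ∑_{k=1}^∞ min_{1≤j≤a_k} L_{k,j} < ∞ almost surely if and only if ∑_{k=1}^∞ F^{(−1)}(1/a_k) < ∞. -/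
/-!
Write `M_k` for the row minima, so that `P(M_k > t) = (1 - F t)^{a_k}`, and `b_k = F^{(-1)}(1/a_k)`.
After shifting the index we may assume `a_k ≥ 2` and `a_{k+1} ≥ c a_k` for all `k`.

If `∑ b_k < ∞`: from `F(b_m) ≥ 1/a_m` we get `P(M_k > b_m) ≤ e^{-a_k/a_m} ≤ a_m/a_k`, which for
`m = ⌊k/2⌋` is at most `c^{-⌊k/2⌋}`. By Borel–Cantelli `M_k ≤ b_{⌊k/2⌋}` eventually, and
`∑ b_{⌊k/2⌋} = 2 ∑ b_k`.

Conversely, `F(t) < 1/a_k` below `b_k`, so `P(M_k > b_k/2) ≥ e^{-2}`. The variables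
`Y_k = min(b_k/2, 1) · 1{M_k > b_k/2} ≤ M_k` are independent with values in `[0,1]`, and for such
variables `∑ Y_k < ∞` a.s. forces `∑ E Y_k < ∞`: the Laplace transforms
`E e^{-∑_{k<n} Y_k} = ∏_{k<n} E e^{-Y_k} ≤ e^{-(1-e^{-1}) ∑_{k<n} E Y_k}` stay above
`E e^{-∑ Y_k} > 0`. Hence `∑ min(b_k/2, 1) < ∞`, i.e. `∑ b_k < ∞`.
-/

open MeasureTheory ProbabilityTheory Filter Set

theorem ProbabilityTheory.iIndepFun.curry {Ω ι κ 𝓧 : Type*} [MeasurableSpace Ω]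
    {μ : Measure Ω} [MeasurableSpace 𝓧] {X : ι → κ → Ω → 𝓧} (mX : ∀ i j, Measurable (X i j))
    (h : iIndepFun (fun p : ι × κ ↦ X p.1 p.2) μ) :
    iIndepFun (fun i ω j ↦ X i j ω) μ := by
  have := h.isProbabilityMeasure
  have : ∀ i j, IsProbabilityMeasure (μ.map (X i j)) :=
    fun i j ↦ Measure.isProbabilityMeasure_map (mX i j).aemeasurable
  have hrow : ∀ i, iIndepFun (X i) μ := fun i ↦
    h.precomp (g := fun j ↦ (i, j)) fun _ _ hj ↦ (Prod.mk.inj hj).2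
  rw [iIndepFun_iff_map_fun_eq_infinitePi_map (fun i ↦ by fun_prop)]
  have hcurry : (fun ω i j ↦ X i j ω) = MeasurableEquiv.curry ι κ 𝓧 ∘ fun ω p ↦ X p.1 p.2 ω :=
    rfl
  rw [hcurry, ← Measure.map_map (by fun_prop) (by fun_prop),
    (iIndepFun_iff_map_fun_eq_infinitePi_map (X := fun p : ι × κ ↦ X p.1 p.2)
      (fun p ↦ mX p.1 p.2)).1 h,
    Measure.infinitePi_map_curry (fun i j ↦ μ.map (X i j))]
  congr with i : 1
  exact ((iIndepFun_iff_map_fun_eq_infinitePi_map (mX i)).1 (hrow i)).symm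

theorem ProbabilityTheory.iIndepFun.measure_lt_inf' {Ω ι : Type*} [MeasurableSpace Ω]
    {μ : Measure Ω} {ν : Measure ℝ} {Y : ι → Ω → ℝ} (hY : ∀ i, Measurable (Y i))
    (hind : iIndepFun Y μ) (hid : ∀ i, μ.map (Y i) = ν) (s : Finset ι) (hs : s.Nonempty)
    (t : ℝ) : μ {ω | t < s.inf' hs (Y · ω)} = ν (Ioi t) ^ s.card := by
  have hinter : {ω | t < s.inf' hs (Y · ω)} = ⋂ i ∈ s, Y i ⁻¹' Ioi t := by
    ext ω; simp [Finset.lt_inf'_iff]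
  rw [hinter, hind.meas_biInter fun i _ ↦ ⟨Ioi t, measurableSet_Ioi, rfl⟩,
    Finset.prod_congr rfl fun i _ ↦ show μ (Y i ⁻¹' Ioi t) = ν (Ioi t) by
      rw [← hid i, Measure.map_apply (hY i) measurableSet_Ioi],
    Finset.prod_const]

theorem Finset.measurable_inf'_eval {ι α : Type*} [MeasurableSpace α] [SemilatticeInf α]
    [MeasurableInf₂ α] (s : Finset ι) (hs : s.Nonempty) :
    Measurable fun x : ι → α ↦ s.inf' hs x := by
  convert Finset.inf'_induction hs (fun i (x : ι → α) ↦ x i) (p := Measurable)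
    (fun _ hf _ hg ↦ hf.inf hg) fun i _ ↦ measurable_pi_apply i using 1
  ext x
  simp only [Finset.inf'_apply]

theorem Summable.comp_div_two {M : Type*} [AddCommMonoid M] [TopologicalSpace M] [ContinuousAdd M]
    {f : ℕ → M} (hf : Summable f) : Summable fun k ↦ f (k / 2) :=
  .even_add_odd (by simpa using hf) (by simpa [Nat.mul_add_div] using hf)

theorem mul_pow_le_of_forall_mul_le_succ {a : ℕ → ℝ} {c : ℝ} (hc : 0 ≤ c)
    (hgrow : ∀ k, c * a k ≤ a (k + 1)) (m n : ℕ) : a m * c ^ n ≤ a (m + n) := by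
  induction n with
  | zero => simp
  | succ n ih =>
    calc a m * c ^ (n + 1) = c * (a m * c ^ n) := by ring
      _ ≤ c * a (m + n) := mul_le_mul_of_nonneg_left ih hc
      _ ≤ a (m + n + 1) := hgrow _

theorem summable_of_summable_min_one {f : ℕ → ℝ} (hf : ∀ k, 0 ≤ f k)
    (h : Summable fun k ↦ min (f k) 1) : Summable f := by
  refine h.of_norm_bounded_eventually_nat ?_
  filter_upwards [h.tendsto_atTop_zero.eventually (gt_mem_nhds one_pos)] with k hk
  rw [Real.norm_of_nonneg (hf k), min_eq_left ((min_lt_iff.1 hk).resolve_right (lt_irrefl 1)).le]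

lemma Real.exp_neg_le_one_sub_mul {x : ℝ} (hx0 : 0 ≤ x) (hx1 : x ≤ 1) :
    Real.exp (-x) ≤ 1 - (1 - Real.exp (-1)) * x := by
  have := convexOn_exp.2 (mem_univ 0) (mem_univ (-1)) (sub_nonneg.2 hx1) hx0 (by ring)
  simp only [smul_eq_mul, mul_zero, zero_add, mul_neg, mul_one, Real.exp_zero] at this
  linarith

lemma Real.exp_neg_two_mul_le_one_sub {x : ℝ} (hx0 : 0 ≤ x) (hx : x ≤ 1 / 2) :
    Real.exp (-(2 * x)) ≤ 1 - x := by
  have he : Real.exp (-1) ≤ 1 / 2 := by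
    rw [Real.exp_neg, inv_le_comm₀ (Real.exp_pos 1) (by norm_num)]
    linarith [Real.add_one_le_exp 1]
  nlinarith [Real.exp_neg_le_one_sub_mul (x := 2 * x) (by linarith) (by linarith)]

lemma Real.exp_neg_le_one_div {y : ℝ} (hy : 0 < y) : Real.exp (-y) ≤ 1 / y := by
  rw [le_div_iff₀ hy, mul_comm]
  exact (Real.mul_exp_neg_le_exp_neg_one y).trans (Real.exp_le_one_iff.2 (by norm_num))

section Laplace

variable {Ω : Type*} [MeasurableSpace Ω] {μ : Measure Ω}

lemma ProbabilityTheory.iIndepFun.integral_exp_neg_sum {X : ℕ → Ω → ℝ}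
    (hX : ∀ k, Measurable (X k)) (hind : iIndepFun X μ) (s : Finset ℕ) :
    ∫ ω, Real.exp (-∑ k ∈ s, X k ω) ∂μ = ∏ k ∈ s, ∫ ω, Real.exp (-X k ω) ∂μ := by
  have hs : iIndepFun (fun k : s ↦ X k) μ := hind.precomp Subtype.val_injective
  simp_rw [← Finset.sum_neg_distrib, Real.exp_sum, ← Finset.prod_coe_sort s]
  exact hs.integral_fun_prod_comp (f := fun _ x ↦ Real.exp (-x)) (fun k ↦ (hX k).aemeasurable)
    (fun _ ↦ by fun_prop)

variable [IsProbabilityMeasure μ]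

lemma integrable_exp_neg_of_nonneg {f : Ω → ℝ} (hf : AEStronglyMeasurable f μ)
    (h0 : ∀ ω, 0 ≤ f ω) : Integrable (fun ω ↦ Real.exp (-f ω)) μ := by
  refine Integrable.of_bound (Real.continuous_exp.comp_aestronglyMeasurable hf.neg) 1
    (ae_of_all _ fun ω ↦ ?_)
  rw [Real.norm_of_nonneg (Real.exp_pos _).le, Real.exp_le_one_iff, neg_nonpos]
  exact h0 ω

lemma integral_exp_neg_le_exp_neg_integral {Y : Ω → ℝ} (hY : Measurable Y)
    (h0 : ∀ ω, 0 ≤ Y ω) (h1 : ∀ ω, Y ω ≤ 1) :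
    ∫ ω, Real.exp (-Y ω) ∂μ ≤ Real.exp (-((1 - Real.exp (-1)) * ∫ ω, Y ω ∂μ)) := by
  have hYint : Integrable Y μ := Integrable.of_bound hY.aestronglyMeasurable 1
    (ae_of_all _ fun ω ↦ by rw [Real.norm_of_nonneg (h0 ω)]; exact h1 ω)
  calc ∫ ω, Real.exp (-Y ω) ∂μ ≤ ∫ ω, (1 - (1 - Real.exp (-1)) * Y ω) ∂μ :=
        integral_mono_of_nonneg (ae_of_all _ fun ω ↦ (Real.exp_pos _).le)
          ((integrable_const 1).sub (hYint.const_mul _))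
          (ae_of_all _ fun ω ↦ Real.exp_neg_le_one_sub_mul (h0 ω) (h1 ω))
    _ = 1 - (1 - Real.exp (-1)) * ∫ ω, Y ω ∂μ := by
        rw [integral_sub (integrable_const 1) (hYint.const_mul _), integral_const_mul]
        simp
    _ ≤ _ := by linarith [Real.add_one_le_exp (-((1 - Real.exp (-1)) * ∫ ω, Y ω ∂μ))]

theorem ProbabilityTheory.iIndepFun.summable_integral_of_ae_summable {X : ℕ → Ω → ℝ}
    (hX : ∀ k, Measurable (X k)) (h0 : ∀ k ω, 0 ≤ X k ω) (h1 : ∀ k ω, X k ω ≤ 1)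
    (hind : iIndepFun X μ) (hsum : ∀ᵐ ω ∂μ, Summable (X · ω)) :
    Summable fun k ↦ ∫ ω, X k ω ∂μ := by
  set κ := 1 - Real.exp (-1)
  have hκ : 0 < κ := sub_pos.2 (Real.exp_lt_one_iff.2 (by norm_num))
  have hpartial : ∀ n, Measurable fun ω ↦ ∑ k ∈ Finset.range n, X k ω :=
    fun n ↦ Finset.measurable_sum _ fun k _ ↦ hX k
  have hIint : Integrable (fun ω ↦ Real.exp (-∑' k, X k ω)) μ :=
    integrable_exp_neg_of_nonneg (aestronglyMeasurable_of_tendsto_ae atTop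
      (fun n ↦ (hpartial n).aestronglyMeasurable) (hsum.mono fun ω h ↦ h.hasSum.tendsto_sum_nat))
      fun ω ↦ tsum_nonneg (h0 · ω)
  set I := ∫ ω, Real.exp (-∑' k, X k ω) ∂μ
  have hI : 0 < I := integral_exp_pos hIint
  refine summable_of_sum_range_le (c := -Real.log I / κ) (fun k ↦ integral_nonneg (h0 k))
    fun n ↦ ?_
  have key : I ≤ Real.exp (-(κ * ∑ k ∈ Finset.range n, ∫ ω, X k ω ∂μ)) :=
    calc I ≤ ∫ ω, Real.exp (-∑ k ∈ Finset.range n, X k ω) ∂μ := by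
          refine integral_mono_ae hIint (integrable_exp_neg_of_nonneg
            (hpartial n).aestronglyMeasurable fun ω ↦ Finset.sum_nonneg fun k _ ↦ h0 k ω)
            (hsum.mono fun ω h ↦ ?_)
          exact Real.exp_le_exp.2 (neg_le_neg (h.sum_le_tsum _ fun k _ ↦ h0 k ω))
      _ = ∏ k ∈ Finset.range n, ∫ ω, Real.exp (-X k ω) ∂μ := hind.integral_exp_neg_sum hX _
      _ ≤ ∏ k ∈ Finset.range n, Real.exp (-(κ * ∫ ω, X k ω ∂μ)) :=
          Finset.prod_le_prod (fun k _ ↦ integral_nonneg fun _ ↦ (Real.exp_pos _).le)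
            fun k _ ↦ integral_exp_neg_le_exp_neg_integral (hX k) (h0 k) (h1 k)
      _ = _ := by rw [← Real.exp_sum, Finset.mul_sum, Finset.sum_neg_distrib]
  rw [le_div_iff₀ hκ, mul_comm]
  linarith [(Real.log_le_iff_le_exp hI).2 key]

end Laplace

noncomputable def ProbabilityTheory.cdfInv (ν : Measure ℝ) (q : ℝ) : ℝ :=
  sInf {t | q ≤ cdf ν t}

namespace ProbabilityTheory

variable {ν : Measure ℝ} {q t : ℝ}

lemma bddBelow_setOf_le_cdf (hq : 0 < q) : BddBelow {t | q ≤ cdf ν t} := by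
  obtain ⟨T, hT⟩ := eventually_atBot.1 ((tendsto_cdf_atBot (μ := ν)).eventually (gt_mem_nhds hq))
  exact ⟨T, fun t ht ↦ le_of_not_ge fun htT ↦ (hT t htT).not_ge ht⟩

lemma cdf_lt_of_lt_cdfInv (hq : 0 < q) (ht : t < cdfInv ν q) : cdf ν t < q :=
  lt_of_not_ge fun h ↦ (csInf_le (bddBelow_setOf_le_cdf hq) h).not_gt ht

lemma le_cdf_cdfInv (hq0 : 0 < q) (hq1 : q < 1) : q ≤ cdf ν (cdfInv ν q) := by
  have hne : {t | q ≤ cdf ν t}.Nonempty :=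
    ((tendsto_cdf_atTop (μ := ν)).eventually (le_mem_nhds hq1)).exists
  have hright : ∀ u, cdfInv ν q < u → q ≤ cdf ν u := fun u hu ↦ by
    obtain ⟨s, hs, hsu⟩ := (csInf_lt_iff (bddBelow_setOf_le_cdf hq0) hne).1 hu
    exact hs.trans (monotone_cdf ν hsu.le)
  exact ge_of_tendsto (((cdf ν).right_continuous _).tendsto.mono_left
    (nhdsWithin_mono _ Ioi_subset_Ici_self)) (eventually_nhdsWithin_of_forall hright)

lemma cdfInv_nonneg [IsProbabilityMeasure ν] (hν : ν (Iio 0) = 0) (hq : 0 < q) :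
    0 ≤ cdfInv ν q := by
  refine Real.sInf_nonneg fun t (ht : q ≤ cdf ν t) ↦ le_of_not_gt fun ht0 ↦ ht.not_gt ?_
  rw [cdf_eq_real, measureReal_def, measure_mono_null (Iic_subset_Iio.2 ht0) hν,
    ENNReal.toReal_zero]
  exact hq

end ProbabilityTheory

section MinTail

variable {Ω : Type*} [MeasurableSpace Ω] {μ : Measure Ω} {ν : Measure ℝ} [IsProbabilityMeasure ν]

section

variable {Y : Ω → ℝ} {n : ℕ} {t : ℝ}

lemma measureReal_lt_eq_one_sub_cdf_pow (htail : μ {ω | t < Y ω} = ν (Ioi t) ^ n) :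
    μ.real {ω | t < Y ω} = (1 - cdf ν t) ^ n := by
  rw [measureReal_def, htail, ENNReal.toReal_pow, ← measureReal_def, ← compl_Iic,
    probReal_compl_eq_one_sub measurableSet_Iic, cdf_eq_real]

lemma measureReal_cdfInv_lt_le (htail : ∀ t, μ {ω | t < Y ω} = ν (Ioi t) ^ n) {m : ℕ}
    (hm : 2 ≤ m) (hn : 0 < n) : μ.real {ω | cdfInv ν (1 / m) < Y ω} ≤ m / n := by
  set x := cdf ν (cdfInv ν (1 / m))
  have hm' : (2 : ℝ) ≤ m := by exact_mod_cast hm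
  have hn' : (0 : ℝ) < n := by exact_mod_cast hn
  have hx : 1 / (m : ℝ) ≤ x :=
    le_cdf_cdfInv (by positivity) ((div_lt_one (by linarith)).2 (by linarith))
  calc μ.real {ω | cdfInv ν (1 / m) < Y ω} = (1 - x) ^ n :=
        measureReal_lt_eq_one_sub_cdf_pow (htail _)
    _ ≤ Real.exp (-x) ^ n :=
        pow_le_pow_left₀ (sub_nonneg.2 (cdf_le_one ν _)) (Real.one_sub_le_exp_neg x) n
    _ = Real.exp (-(n * x)) := by rw [← Real.exp_nat_mul, mul_neg]
    _ ≤ Real.exp (-(n / m)) := by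
        gcongr
        calc (n : ℝ) / m = n * (1 / m) := by ring
          _ ≤ n * x := by gcongr
    _ ≤ 1 / (n / m) := Real.exp_neg_le_one_div (by positivity)
    _ = m / n := one_div_div _ _

lemma exp_neg_two_le_measureReal_lt (htail : μ {ω | t < Y ω} = ν (Ioi t) ^ n) (hn : 2 ≤ n)
    (ht : t < cdfInv ν (1 / n)) : Real.exp (-2) ≤ μ.real {ω | t < Y ω} := by
  set x := cdf ν t
  have hn' : (2 : ℝ) ≤ n := by exact_mod_cast hn
  have hx : x < 1 / n := cdf_lt_of_lt_cdfInv (by positivity) ht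
  have hx0 : 0 ≤ x := cdf_nonneg ν t
  have hx2 : x ≤ 1 / 2 := hx.le.trans (one_div_le_one_div_of_le (by norm_num) hn')
  rw [measureReal_lt_eq_one_sub_cdf_pow htail]
  calc Real.exp (-2) ≤ Real.exp (-(n * (2 * x))) := by
        gcongr
        rw [lt_div_iff₀ (by linarith)] at hx
        nlinarith
    _ = Real.exp (-(2 * x)) ^ n := by rw [← Real.exp_nat_mul, mul_neg]
    _ ≤ (1 - x) ^ n :=
        pow_le_pow_left₀ (Real.exp_pos _).le (Real.exp_neg_two_mul_le_one_sub hx0 hx2) n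

end

variable {X : ℕ → Ω → ℝ} {a : ℕ → ℕ}

theorem ae_summable_of_summable_cdfInv [IsFiniteMeasure μ] (hX0 : ∀ k ω, 0 ≤ X k ω)
    (htail : ∀ k t, μ {ω | t < X k ω} = ν (Ioi t) ^ a k) (ha : ∀ k, 2 ≤ a k) {c : ℝ}
    (hc : 1 < c) (hgrow : ∀ k, c * a k ≤ a (k + 1))
    (hsum : Summable fun k ↦ cdfInv ν (1 / a k)) :
    ∀ᵐ ω ∂μ, Summable (X · ω) := by
  have hbound : ∀ k, μ.real {ω | cdfInv ν (1 / a (k / 2)) < X k ω} ≤ c⁻¹ ^ (k / 2) := by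
    intro k
    have hgrowth := mul_pow_le_of_forall_mul_le_succ (by linarith) hgrow (k / 2) (k - k / 2)
    rw [Nat.add_sub_cancel' (Nat.div_le_self k 2)] at hgrowth
    have hak : (0 : ℝ) < a k := by have := ha k; positivity
    calc _ ≤ (a (k / 2) : ℝ) / a k :=
          measureReal_cdfInv_lt_le (htail k) (ha _) (by have := ha k; omega)
      _ ≤ c⁻¹ ^ (k - k / 2) := by
          rw [inv_pow, div_le_iff₀ hak, ← div_eq_inv_mul,
            le_div_iff₀ (pow_pos (by linarith) _)]
          exact hgrowth
      _ ≤ c⁻¹ ^ (k / 2) :=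
          pow_le_pow_of_le_one (by positivity) (inv_le_one_of_one_le₀ hc.le) (by omega)
  have hfinite : ∑' k, μ {ω | cdfInv ν (1 / a (k / 2)) < X k ω} ≠ ⊤ := by
    refine ne_top_of_le_ne_top (summable_geometric_of_lt_one (by positivity)
      (inv_lt_one_of_one_lt₀ hc)).comp_div_two.tsum_ofReal_ne_top
      (ENNReal.tsum_le_tsum fun k ↦ ?_)
    rw [← ofReal_measureReal]
    exact ENNReal.ofReal_le_ofReal (hbound k)
  filter_upwards [ae_eventually_notMem hfinite] with ω hω
  refine hsum.comp_div_two.of_norm_bounded_eventually_nat (hω.mono fun k hk ↦ ?_)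
  rw [Real.norm_of_nonneg (hX0 k ω)]
  exact le_of_not_gt hk

theorem summable_cdfInv_of_ae_summable [IsProbabilityMeasure μ] (hX : ∀ k, Measurable (X k))
    (hX0 : ∀ k ω, 0 ≤ X k ω) (hind : iIndepFun X μ) (hν : ν (Iio 0) = 0)
    (htail : ∀ k t, μ {ω | t < X k ω} = ν (Ioi t) ^ a k) (ha : ∀ k, 2 ≤ a k)
    (hsum : ∀ᵐ ω ∂μ, Summable (X · ω)) : Summable fun k ↦ cdfInv ν (1 / a k) := by
  set Q := fun k ↦ cdfInv ν (1 / a k)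
  have hQ0 : ∀ k, 0 ≤ Q k := fun k ↦ cdfInv_nonneg hν (by have := ha k; positivity)
  set β := fun k ↦ min (Q k / 2) 1
  have hβ0 : ∀ k, 0 ≤ β k := fun k ↦ le_min (by linarith [hQ0 k]) zero_le_one
  set g := fun k ↦ (Ioi (Q k / 2)).indicator fun _ ↦ β k
  have hg : ∀ k, Measurable (g k) := fun k ↦ measurable_const.indicator measurableSet_Ioi
  have hg0 : ∀ k x, 0 ≤ g k x := fun k x ↦ indicator_nonneg (fun _ _ ↦ hβ0 k) x
  have hg1 : ∀ k x, g k x ≤ 1 := fun k x ↦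
    indicator_le' (fun _ _ ↦ min_le_right _ _) (fun _ _ ↦ zero_le_one) x
  have hgX : ∀ k ω, g k (X k ω) ≤ X k ω := fun k ω ↦ by
    by_cases h : Q k / 2 < X k ω
    · simp only [g, indicator_of_mem (mem_Ioi.2 h)]
      exact (min_le_left _ _).trans h.le
    · simp only [g, indicator_of_notMem (h ∘ mem_Ioi.1)]
      exact hX0 k ω
  have hsumg := (hind.comp g hg).summable_integral_of_ae_summable (fun k ↦ (hg k).comp (hX k))
    (fun k ω ↦ hg0 k _) (fun k ω ↦ hg1 k _)
    (hsum.mono fun ω h ↦ h.of_nonneg_of_le (fun k ↦ hg0 k _) (fun k ↦ hgX k ω))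
  have hβ_le : ∀ k, β k ≤ Real.exp 2 * ∫ ω, g k (X k ω) ∂μ := fun k ↦ by
    have hcomp : (fun ω ↦ g k (X k ω)) = (X k ⁻¹' Ioi (Q k / 2)).indicator fun _ ↦ β k := rfl
    rw [hcomp, integral_indicator_const _ (hX k measurableSet_Ioi), smul_eq_mul]
    rcases (hQ0 k).eq_or_lt with h | h
    · simp [β, ← h]
    · calc β k = Real.exp 2 * (Real.exp (-2) * β k) := by
            rw [← mul_assoc, ← Real.exp_add]; simp
        _ ≤ Real.exp 2 * (μ.real (X k ⁻¹' Ioi (Q k / 2)) * β k) := by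
            gcongr
            exact exp_neg_two_le_measureReal_lt (htail k _) (ha k) (by simp only [Q]; linarith)
  have hβ : Summable β := (hsumg.mul_left (Real.exp 2)).of_nonneg_of_le hβ0 hβ_le
  exact (summable_div_const_iff two_ne_zero).1
    (summable_of_summable_min_one (fun k ↦ by linarith [hQ0 k]) hβ)

theorem ae_summable_iff_summable_cdfInv [IsProbabilityMeasure μ] (hX : ∀ k, Measurable (X k))
    (hX0 : ∀ k ω, 0 ≤ X k ω) (hind : iIndepFun X μ) (hν : ν (Iio 0) = 0)
    (htail : ∀ k t, μ {ω | t < X k ω} = ν (Ioi t) ^ a k) (hatop : Tendsto a atTop atTop) {c : ℝ}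
    (hc : 1 < c) (hgrow : ∀ᶠ k in atTop, c * (a k : ℝ) ≤ a (k + 1)) :
    (∀ᵐ ω ∂μ, Summable (X · ω)) ↔ Summable fun k ↦ cdfInv ν (1 / a k) := by
  obtain ⟨N, hN⟩ := eventually_atTop.1 (hgrow.and (hatop.eventually_ge_atTop 2))
  have hshift : ∀ ω, Summable (X · ω) ↔ Summable fun k ↦ X (k + N) ω :=
    fun ω ↦ (summable_nat_add_iff N).symm
  simp only [hshift, ← summable_nat_add_iff N (f := fun k ↦ cdfInv ν (1 / a k))]
  have ha : ∀ k, 2 ≤ a (k + N) := fun k ↦ (hN _ (Nat.le_add_left N k)).2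
  constructor
  · exact summable_cdfInv_of_ae_summable (fun k ↦ hX _) (fun k ↦ hX0 _)
      (hind.precomp (add_left_injective N)) hν (fun k ↦ htail _) ha
  · refine ae_summable_of_summable_cdfInv (fun k ↦ hX0 _) (fun k ↦ htail _) ha hc fun k ↦ ?_
    rw [Nat.add_right_comm]
    exact (hN _ (Nat.le_add_left N k)).1

end MinTail

/-- **Lemma 5.4 (min-summability criterion).** For i.i.d. nonnegative random
variables `(L_{k,j})` with common law `ν` (CDF `F(t) = ν(-∞,t]`), and positive
integers `a_k → ∞` with `a_{k+1} ≥ c a_k` eventually for some `c > 1`,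
`∑_k min_{1 ≤ j ≤ a_k} L_{k,j} < ∞` a.s. iff `∑_k F^{(-1)}(1/a_k) < ∞`. -/
theorem stmt1 {Ω : Type*} [MeasurableSpace Ω] (μ : Measure Ω) [IsProbabilityMeasure μ]
    (L : ℕ → ℕ → Ω → ℝ) (hmeas : ∀ k j, Measurable (L k j))
    (hnonneg : ∀ k j ω, 0 ≤ L k j ω)
    (hindep : iIndepFun (fun p : ℕ × ℕ => L p.1 p.2) μ)
    (ν : Measure ℝ) [IsProbabilityMeasure ν]
    (hid : ∀ k j, Measure.map (L k j) μ = ν)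
    (a : ℕ → ℕ) (hapos : ∀ k, 0 < a k)
    (hatop : Tendsto a atTop atTop)
    (c : ℝ) (hc : 1 < c)
    (hgrow : ∀ᶠ k in atTop, c * (a k : ℝ) ≤ (a (k + 1) : ℝ)) :
    (∀ᵐ ω ∂μ, Summable (fun k : ℕ =>
        (Finset.Icc 1 (a k)).inf' (Finset.nonempty_Icc.mpr (hapos k))
          (fun j => L k j ω))) ↔
      Summable (fun k : ℕ =>
        sInf {t : ℝ | (1 : ℝ) / (a k : ℝ) ≤ (ν (Set.Iic t)).toReal}) := by
  set M : ℕ → Ω → ℝ := fun k ω ↦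
    (Finset.Icc 1 (a k)).inf' (Finset.nonempty_Icc.mpr (hapos k)) fun j ↦ L k j ω
  have hrowmin : ∀ k, Measurable fun x : ℕ → ℝ ↦
      (Finset.Icc 1 (a k)).inf' (Finset.nonempty_Icc.mpr (hapos k)) x :=
    fun k ↦ Finset.measurable_inf'_eval _ _
  have hν : ν (Iio 0) = 0 := by
    rw [← hid 0 0, Measure.map_apply (hmeas 0 0) measurableSet_Iio]
    exact measure_mono_null (fun ω h ↦ (not_lt.2 (hnonneg 0 0 ω)) h) measure_empty
  have htail : ∀ k t, μ {ω | t < M k ω} = ν (Ioi t) ^ a k := fun k t ↦ by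
    rw [(hindep.precomp (g := fun j ↦ (k, j)) fun _ _ h ↦ (Prod.mk.inj h).2).measure_lt_inf'
      (hmeas k) (hid k), Nat.card_Icc, Nat.add_sub_cancel]
  have key := ae_summable_iff_summable_cdfInv (X := M)
    (fun k ↦ (hrowmin k).comp (measurable_pi_lambda _ (hmeas k)))
    (fun k ω ↦ Finset.le_inf' _ _ fun j _ ↦ hnonneg k j ω)
    ((hindep.curry hmeas).comp _ hrowmin) hν htail hatop hc hgrow
  simpa only [cdfInv, cdf_eq_real, measureReal_def] using key
end

section
/- For every integer d ≥ 1 and reals α > d and λ > 0 there exists a constant c > 0 such that for every real b ≥ 1, ∑_{y ∈ ℤ^d, y ≠ 0} (1 − exp(−λ·b·‖y‖^{−α})) ≤ c·b^{d/α}. -/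
/-!
Each term is at most `min 1 (λ b ‖y‖∞^(-α))`, and the sup-norm shell of radius `m` holds at most
`2d (3m)^(d-1)` lattice points, so the sum is controlled by `∑ₘ m^(d-1) min 1 (λ b m^(-α))`.
Cutting this at `N = ⌈r⌉`, `r = b^(1/α)`, the part `m ≤ N` is at most `(2r)^d`, and the part
`m > N` is at most `λ b r^(d-α) / (α - d)` by comparison with `∫_N^∞ x^(d-1-α) dx`;
both are multiples of `r^d = b^(d/α)`.
-/

/-- The Euclidean norm of a point of the integer lattice `ℤ^d`. -/
noncomputable def euclNorm {d : ℕ} (y : Fin d → ℤ) : ℝ :=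
  Real.sqrt (∑ i, ((y i : ℝ)) ^ 2)

open Finset

lemma one_sub_exp_neg_le_min (t : ℝ) : 1 - Real.exp (-t) ≤ min 1 t :=
  le_min (by linarith [Real.exp_pos (-t)]) (by linarith [Real.add_one_le_exp (-t)])

lemma one_sub_exp_neg_nonneg {t : ℝ} (ht : 0 ≤ t) : 0 ≤ 1 - Real.exp (-t) := by
  have := Real.exp_le_one_iff.2 (neg_nonpos.2 ht)
  linarith

lemma sum_Ioc_rpow_le {p : ℝ} (hp : p < 0) {N : ℕ} (hN : 0 < N) (M : ℕ) :
    ∑ m ∈ Ioc N M, (m : ℝ) ^ (p - 1) ≤ (N : ℝ) ^ p / -p := by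
  rcases le_or_gt M N with hMN | hNM
  · rw [Ioc_eq_empty (by omega), sum_empty]
    exact div_nonneg (by positivity) (by linarith)
  have hN' : (0 : ℝ) < N := by exact_mod_cast hN
  have hanti : AntitoneOn (fun x : ℝ => x ^ (p - 1)) (Set.Icc (N : ℝ) M) :=
    fun x hx y _ hxy => Real.rpow_le_rpow_of_nonpos (hN'.trans_le hx.1) hxy (by linarith)
  have hzero : (0 : ℝ) ∉ Set.uIcc (N : ℝ) M := by
    rw [Set.uIcc_of_le (by exact_mod_cast hNM.le)]
    exact fun h => hN'.not_ge h.1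
  calc ∑ m ∈ Ioc N M, (m : ℝ) ^ (p - 1)
      = ∑ i ∈ Ico N M, ((i + 1 : ℕ) : ℝ) ^ (p - 1) := by
        rw [← Ico_add_one_add_one_eq_Ioc, ← sum_Ico_add' (fun m : ℕ => (m : ℝ) ^ (p - 1))]
    _ ≤ ∫ x in (N : ℝ)..M, x ^ (p - 1) := hanti.sum_le_integral_Ico hNM.le
    _ = ((N : ℝ) ^ p - (M : ℝ) ^ p) / -p := by
        rw [integral_rpow (Or.inr ⟨by linarith, hzero⟩), sub_add_cancel, ← neg_sub, div_neg,
          neg_div]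
    _ ≤ (N : ℝ) ^ p / -p := by
        gcongr
        · linarith
        · exact sub_le_self _ (by positivity)

lemma sum_pow_mul_min_le_of_cutoff {k : ℕ} {α t : ℝ} (hα : (k : ℝ) + 1 < α) (ht : 0 ≤ t)
    {N : ℕ} (hN : 0 < N) (M : ℕ) :
    ∑ m ∈ Icc 1 M, (m : ℝ) ^ k * min 1 (t * (m : ℝ) ^ (-α))
      ≤ (N : ℝ) ^ (k + 1) + t * ((N : ℝ) ^ ((k : ℝ) + 1 - α) / (α - (k + 1))) := by
  set p : ℝ := k + 1 - α with hp_def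
  have hp : p < 0 := by linarith
  classical
  rw [← sum_filter_add_sum_filter_not _ (· ≤ N)]
  have h_near : ∑ m ∈ Icc 1 M with m ≤ N, (m : ℝ) ^ k * min 1 (t * (m : ℝ) ^ (-α))
      ≤ (N : ℝ) ^ (k + 1) := by
    calc _ ≤ ∑ m ∈ Icc 1 M with m ≤ N, (N : ℝ) ^ k := by
          refine sum_le_sum fun m hm => ?_
          have hmN : (m : ℝ) ≤ N := by exact_mod_cast (mem_filter.1 hm).2
          calc (m : ℝ) ^ k * min 1 (t * (m : ℝ) ^ (-α)) ≤ (m : ℝ) ^ k * 1 := by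
                gcongr; exact min_le_left _ _
            _ ≤ (N : ℝ) ^ k := by rw [mul_one]; gcongr
      _ ≤ ∑ m ∈ Icc 1 N, (N : ℝ) ^ k := by
          refine sum_le_sum_of_subset_of_nonneg (fun m hm => ?_) (fun _ _ _ => by positivity)
          simp only [mem_filter, mem_Icc] at hm ⊢
          omega
      _ = (N : ℝ) ^ (k + 1) := by simp [pow_succ']
  have h_far : ∑ m ∈ Icc 1 M with ¬m ≤ N, (m : ℝ) ^ k * min 1 (t * (m : ℝ) ^ (-α))
      ≤ t * ((N : ℝ) ^ p / (α - (k + 1))) := by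
    calc _ ≤ ∑ m ∈ Icc 1 M with ¬m ≤ N, t * (m : ℝ) ^ (p - 1) := by
          refine sum_le_sum fun m hm => ?_
          have hm : (0 : ℝ) < m := by exact_mod_cast (mem_Icc.1 (mem_filter.1 hm).1).1
          calc (m : ℝ) ^ k * min 1 (t * (m : ℝ) ^ (-α))
              ≤ (m : ℝ) ^ k * (t * (m : ℝ) ^ (-α)) := by gcongr; exact min_le_right _ _
            _ = t * (m : ℝ) ^ (p - 1) := by
              rw [mul_left_comm, ← Real.rpow_natCast, ← Real.rpow_add hm, hp_def]
              ring_nf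
      _ ≤ ∑ m ∈ Ioc N M, t * (m : ℝ) ^ (p - 1) := by
          refine sum_le_sum_of_subset_of_nonneg (fun m hm => ?_) (fun _ _ _ => by positivity)
          simp only [mem_filter, mem_Icc, mem_Ioc] at hm ⊢
          omega
      _ = t * ∑ m ∈ Ioc N M, (m : ℝ) ^ (p - 1) := by rw [mul_sum]
      _ ≤ t * ((N : ℝ) ^ p / (α - (k + 1))) := by
          gcongr
          exact (sum_Ioc_rpow_le hp hN M).trans_eq (by rw [hp_def, neg_sub, sub_add_eq_sub_sub])
  linarith

lemma sum_pow_mul_min_le {k : ℕ} {α lam : ℝ} (hα : (k : ℝ) + 1 < α) (hlam : 0 ≤ lam) {b : ℝ}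
    (hb : 1 ≤ b) (M : ℕ) :
    ∑ m ∈ Icc 1 M, (m : ℝ) ^ k * min 1 (lam * b * (m : ℝ) ^ (-α))
      ≤ (2 ^ (k + 1) + lam / (α - (k + 1))) * b ^ (((k : ℝ) + 1) / α) := by
  have hα0 : 0 < α := by linarith [(k.cast_nonneg : (0 : ℝ) ≤ k)]
  set r : ℝ := b ^ α⁻¹
  have hr : 1 ≤ r := Real.one_le_rpow hb (inv_nonneg.2 hα0.le)
  have hr_pow : r ^ (k + 1) = b ^ (((k : ℝ) + 1) / α) := by
    rw [← Real.rpow_mul_natCast (by linarith)]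
    push_cast
    ring_nf
  have hb_rpow : b * r ^ ((k : ℝ) + 1 - α) = b ^ (((k : ℝ) + 1) / α) := by
    rw [← Real.rpow_mul (by linarith), ← Real.rpow_one_add' (by linarith)]
    · congr 1; field_simp; ring
    · field_simp
      ring_nf
      positivity
  have hrN : r ≤ ⌈r⌉₊ := Nat.le_ceil r
  have hNr : (⌈r⌉₊ : ℝ) ≤ 2 * r := by linarith [Nat.ceil_lt_add_one (by linarith : (0 : ℝ) ≤ r)]
  calc _ ≤ (⌈r⌉₊ : ℝ) ^ (k + 1) + lam * b * ((⌈r⌉₊ : ℝ) ^ ((k : ℝ) + 1 - α) / (α - (k + 1))) :=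
        sum_pow_mul_min_le_of_cutoff hα (by positivity) (Nat.ceil_pos.2 (by linarith)) M
    _ ≤ (2 * r) ^ (k + 1) + lam * b * (r ^ ((k : ℝ) + 1 - α) / (α - (k + 1))) := by
        gcongr ?_ + lam * b * (?_ / _)
        · exact pow_le_pow_left₀ (Nat.cast_nonneg _) hNr _
        · exact Real.rpow_le_rpow_of_nonpos (by linarith) hrN (by linarith)
    _ = (2 ^ (k + 1) + lam / (α - (k + 1))) * b ^ (((k : ℝ) + 1) / α) := by
        rw [mul_pow, hr_pow, ← hb_rpow]
        ring

def supNorm {d : ℕ} (z : Fin d → ℤ) : ℕ := univ.sup fun i => (z i).natAbs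

noncomputable def latticeBall (d m : ℕ) : Finset (Fin d → ℤ) :=
  Fintype.piFinset fun _ => Icc (-(m : ℤ)) m

lemma mem_latticeBall {d m : ℕ} {z : Fin d → ℤ} : z ∈ latticeBall d m ↔ supNorm z ≤ m := by
  simp only [latticeBall, Fintype.mem_piFinset, mem_Icc, supNorm, Finset.sup_le_iff, mem_univ,
    true_imp_iff]
  exact forall_congr' fun i => by omega

lemma card_latticeBall (d m : ℕ) : #(latticeBall d m) = (2 * m + 1) ^ d := by
  rw [latticeBall, Fintype.card_piFinset_const, Int.card_Icc]
  congr 1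
  omega

lemma one_le_supNorm {d : ℕ} {z : Fin d → ℤ} (hz : z ≠ 0) : 1 ≤ supNorm z := by
  obtain ⟨i, hi⟩ := Function.ne_iff.mp hz
  exact (Int.natAbs_pos.2 hi).trans_le (le_sup (f := fun i => (z i).natAbs) (mem_univ i))

lemma supNorm_le_euclNorm {d : ℕ} (z : Fin d → ℤ) : (supNorm z : ℝ) ≤ euclNorm z := by
  rcases isEmpty_or_nonempty (Fin d) with hd | hd
  · simp [supNorm, euclNorm]
  obtain ⟨i, -, hi⟩ := exists_mem_eq_sup univ univ_nonempty fun i => (z i).natAbs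
  rw [supNorm, hi, Nat.cast_natAbs, Int.cast_abs, ← Real.sqrt_sq_eq_abs, euclNorm]
  exact Real.sqrt_le_sqrt (single_le_sum (fun j _ => sq_nonneg ((z j : ℝ))) (mem_univ i))

lemma card_supNorm_eq_le {d m : ℕ} (hm : 1 ≤ m) :
    (#{z ∈ latticeBall d m | supNorm z = m} : ℝ) ≤ 2 * d * 3 ^ (d - 1) * (m : ℝ) ^ (d - 1) := by
  classical
  have hsub : {z ∈ latticeBall d m | supNorm z = m} ⊆ latticeBall d m \ latticeBall d (m - 1) := by
    intro z hz
    simp only [mem_filter, mem_sdiff, mem_latticeBall] at hz ⊢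
    omega
  have hball : latticeBall d (m - 1) ⊆ latticeBall d m := fun z hz =>
    mem_latticeBall.2 ((mem_latticeBall.1 hz).trans (Nat.sub_le m 1))
  have hcard := card_le_card hsub
  rw [card_sdiff_of_subset hball, card_latticeBall, card_latticeBall] at hcard
  have hm' : (1 : ℝ) ≤ m := by exact_mod_cast hm
  calc (#{z ∈ latticeBall d m | supNorm z = m} : ℝ)
      ≤ (2 * (m : ℝ) + 1) ^ d - (2 * (m : ℝ) - 1) ^ d := by
        have hle : (2 * (m - 1) + 1) ^ d ≤ (2 * m + 1) ^ d := Nat.pow_le_pow_left (by omega) d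
        refine (Nat.cast_le.2 hcard).trans_eq ?_
        rw [Nat.cast_sub hle]
        push_cast [Nat.cast_sub hm]
        ring_nf
    _ ≤ |(2 * (m : ℝ) + 1) - (2 * m - 1)| * d * max |2 * (m : ℝ) + 1| |2 * (m : ℝ) - 1| ^ (d - 1) :=
        (le_abs_self _).trans (abs_pow_sub_pow_le _ _ _)
    _ = 2 * d * (2 * (m : ℝ) + 1) ^ (d - 1) := by
        rw [abs_of_nonneg (by linarith), abs_of_nonneg (by linarith), abs_of_nonneg (by linarith),
          max_eq_left (by linarith)]
        ring
    _ ≤ 2 * d * 3 ^ (d - 1) * (m : ℝ) ^ (d - 1) := by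
        rw [mul_assoc _ (3 ^ (d - 1)), ← mul_pow]
        gcongr
        linarith

lemma sum_comp_supNorm_le {d : ℕ} (g : ℕ → ℝ) (hg : ∀ m, 0 ≤ g m) (G : Finset (Fin d → ℤ))
    (hG : ∀ z ∈ G, z ≠ 0) :
    ∑ z ∈ G, g (supNorm z)
      ≤ 2 * d * 3 ^ (d - 1) * ∑ m ∈ Icc 1 (G.sup supNorm), (m : ℝ) ^ (d - 1) * g m := by
  have hmaps : ∀ z ∈ G, supNorm z ∈ Icc 1 (G.sup supNorm) := fun z hz =>
    mem_Icc.2 ⟨one_le_supNorm (hG z hz), le_sup hz⟩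
  rw [← sum_fiberwise_of_maps_to hmaps, mul_sum]
  refine sum_le_sum fun m hm => ?_
  have hfiber : {z ∈ G | supNorm z = m} ⊆ {z ∈ latticeBall d m | supNorm z = m} := by
    intro z hz
    simp only [mem_filter] at hz ⊢
    exact ⟨mem_latticeBall.2 hz.2.le, hz.2⟩
  calc ∑ z ∈ G with supNorm z = m, g (supNorm z) = #{z ∈ G | supNorm z = m} * g m := by
        rw [sum_congr rfl fun z hz => by rw [(mem_filter.1 hz).2], sum_const, nsmul_eq_mul]
    _ ≤ #{z ∈ latticeBall d m | supNorm z = m} * g m :=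
        mul_le_mul_of_nonneg_right (by exact_mod_cast card_le_card hfiber) (hg m)
    _ ≤ 2 * d * 3 ^ (d - 1) * (m : ℝ) ^ (d - 1) * g m :=
        mul_le_mul_of_nonneg_right (card_supNorm_eq_le (mem_Icc.1 hm).1) (hg m)
    _ = _ := by ring

lemma one_sub_exp_le_min_supNorm {d : ℕ} {z : Fin d → ℤ} (hz : z ≠ 0) {α t : ℝ} (hα : 0 ≤ α)
    (ht : 0 ≤ t) :
    1 - Real.exp (-(t * euclNorm z ^ (-α))) ≤ min 1 (t * (supNorm z : ℝ) ^ (-α)) := by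
  have hz' : (0 : ℝ) < supNorm z := by exact_mod_cast one_le_supNorm hz
  refine (one_sub_exp_neg_le_min _).trans (min_le_min_left _ ?_)
  gcongr t * ?_
  exact Real.rpow_le_rpow_of_nonpos hz' (supNorm_le_euclNorm z) (neg_nonpos.2 hα)

lemma sum_one_sub_exp_neg_le {k : ℕ} {α lam b : ℝ} (hα : (k : ℝ) + 1 < α) (hlam : 0 ≤ lam)
    (hb : 1 ≤ b) (G : Finset (Fin (k + 1) → ℤ)) (hG : ∀ z ∈ G, z ≠ 0) :
    ∑ z ∈ G, (1 - Real.exp (-(lam * b * euclNorm z ^ (-α))))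
      ≤ 2 * (k + 1) * 3 ^ k * (2 ^ (k + 1) + lam / (α - (k + 1))) * b ^ (((k : ℝ) + 1) / α) := by
  set g : ℕ → ℝ := fun m => min 1 (lam * b * (m : ℝ) ^ (-α))
  have hg : ∀ m, 0 ≤ g m := fun m => le_min zero_le_one (by positivity)
  calc _ ≤ ∑ z ∈ G, g (supNorm z) := sum_le_sum fun z hz =>
        one_sub_exp_le_min_supNorm (hG z hz) (by linarith [(k.cast_nonneg : (0 : ℝ) ≤ k)])
          (by positivity)
    _ ≤ 2 * (k + 1) * 3 ^ k * ∑ m ∈ Icc 1 (G.sup supNorm), (m : ℝ) ^ k * g m := by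
        simpa using sum_comp_supNorm_le g hg G hG
    _ ≤ 2 * (k + 1) * 3 ^ k * ((2 ^ (k + 1) + lam / (α - (k + 1))) * b ^ (((k : ℝ) + 1) / α)) :=
        mul_le_mul_of_nonneg_left (sum_pow_mul_min_le hα hlam hb _) (by positivity)
    _ = _ := (mul_assoc _ _ _).symm

/-- For `d ≥ 1`, `α > d` and `λ > 0` there is `c > 0` such that for all `b ≥ 1`,
`∑_{y ∈ ℤ^d, y ≠ 0} (1 - exp(-λ b ‖y‖^{-α})) ≤ c b^{d/α}`. -/
theorem stmt3 (d : ℕ) (hd : 1 ≤ d) (α lam : ℝ) (hα : (d : ℝ) < α) (hlam : 0 < lam) :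
    ∃ c > (0 : ℝ), ∀ b : ℝ, 1 ≤ b →
      Summable (fun y : {y : Fin d → ℤ // y ≠ 0} =>
        1 - Real.exp (-(lam * b * euclNorm y.1 ^ (-α)))) ∧
      (∑' y : {y : Fin d → ℤ // y ≠ 0},
          (1 - Real.exp (-(lam * b * euclNorm y.1 ^ (-α)))))
        ≤ c * b ^ ((d : ℝ) / α) := by
  obtain ⟨k, rfl⟩ : ∃ k, d = k + 1 := ⟨d - 1, by omega⟩
  push_cast at hα ⊢
  have hα' : 0 < α - (k + 1) := by linarith
  refine ⟨2 * (k + 1) * 3 ^ k * (2 ^ (k + 1) + lam / (α - (k + 1))), by positivity, fun b hb => ?_⟩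
  have hbound : ∀ u : Finset {y : Fin (k + 1) → ℤ // y ≠ 0},
      ∑ y ∈ u, (1 - Real.exp (-(lam * b * euclNorm y.1 ^ (-α))))
        ≤ 2 * (k + 1) * 3 ^ k * (2 ^ (k + 1) + lam / (α - (k + 1))) * b ^ (((k : ℝ) + 1) / α) :=
    fun u => by
      simpa using sum_one_sub_exp_neg_le hα hlam.le hb (u.map (Function.Embedding.subtype _))
        fun z hz => by obtain ⟨y, -, rfl⟩ := mem_map.1 hz; exact y.2
  have hnonneg : ∀ y : {y : Fin (k + 1) → ℤ // y ≠ 0},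
      0 ≤ 1 - Real.exp (-(lam * b * euclNorm y.1 ^ (-α))) := fun y =>
    one_sub_exp_neg_nonneg (mul_nonneg (by positivity) (Real.rpow_nonneg (Real.sqrt_nonneg _) _))
  have hsum := summable_of_sum_le hnonneg hbound
  exact ⟨hsum, hsum.tsum_le_of_sum_le hbound⟩
end

section
/- Let d ≥ 1 be an integer and α > d a real. There exists a constant C > 0, depending only on d and α, such that for every real λ > 0, every random variable W with W ≥ 1 almost surely, and all reals w ≥ 1 and S ≥ 2: ∑_{y ∈ ℤ^d, ‖y‖ ≥ S} E[ 1 − exp(−λ·w·W·‖y‖^{−α}) ] ≤ C·( λ·w·S^{d−α}·E[ W·1{λwW ≤ S^α} ] + (λw)^{d/α}·E[ W^{d/α}·1{λwW ≥ S^α} ] ). -/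
open MeasureTheory

/-!
Each summand satisfies `0 ≤ 1 - exp(-t ‖y‖^{-α}) ≤ min 1 (t ‖y‖^{-α})`. Counting lattice points in
dyadic shells gives `∑_{‖y‖ ≥ R} ‖y‖^{-α} ≤ C R^{d-α}` for `R ≥ 1`. For `t = λwW ≤ S^α` the linear
bound over `‖y‖ ≥ S` suffices. Otherwise split at `ρ = t^{1/α} ≥ S`: the at most `(3ρ)^d` points
with `‖y‖ ≤ ρ` contribute at most `1` each and the tail beyond `ρ` contributes `t C ρ^{d-α}`, both
of order `t^{d/α}`. Integrating this pointwise bound in `ω` gives the claim.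
-/

open scoped ENNReal

section Lattice

variable {d : ℕ}

lemma euclNorm_nonneg (y : Fin d → ℤ) : 0 ≤ euclNorm y := Real.sqrt_nonneg _

lemma abs_le_euclNorm (y : Fin d → ℤ) (i : Fin d) : |(y i : ℝ)| ≤ euclNorm y :=
  Real.abs_le_sqrt <| Finset.single_le_sum (f := fun j => (y j : ℝ) ^ 2)
    (fun _ _ => sq_nonneg _) (Finset.mem_univ i)

lemma tsum_le_of_euclNorm_le {ρ : ℝ} (hρ : 1 ≤ ρ) {s : Set (Fin d → ℤ)}
    (hs : ∀ y ∈ s, euclNorm y ≤ ρ) (f : (Fin d → ℤ) → ℝ≥0∞) {c : ℝ≥0∞}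
    (hf : ∀ y ∈ s, f y ≤ c) :
    ∑' y : s, f y ≤ ENNReal.ofReal ((3 * ρ) ^ d) * c := by
  set N := ⌊ρ⌋₊
  have hsub : s ⊆ ↑(Fintype.piFinset fun _ : Fin d => Finset.Icc (-(N : ℤ)) N) := by
    intro y hy
    simp only [Finset.mem_coe, Fintype.mem_piFinset, Finset.mem_Icc, ← abs_le]
    intro i
    have : |y i| ≤ ⌊ρ⌋ := Int.le_floor.mpr <| by
      push_cast; exact (abs_le_euclNorm y i).trans (hs y hy)
    rwa [← Int.natCast_floor_eq_floor (by linarith)] at this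
  have hN : ((2 * N + 1 : ℕ) : ℝ) ≤ 3 * ρ := by
    push_cast; linarith [Nat.floor_le (zero_le_one.trans hρ)]
  have hcard : (s.encard : ℝ≥0∞) ≤ ENNReal.ofReal ((3 * ρ) ^ d) := by
    calc (s.encard : ℝ≥0∞) ≤ ((2 * N + 1 : ℕ) : ℝ≥0∞) ^ d := by
          refine (ENat.toENNReal_le.mpr (Set.encard_le_encard hsub)).trans_eq ?_
          rw [Set.encard_coe_eq_coe_finsetCard, Fintype.card_piFinset_const, Int.card_Icc,
            show ((N : ℤ) + 1 - -(N : ℤ)).toNat = 2 * N + 1 by omega]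
          push_cast; rfl
      _ ≤ ENNReal.ofReal ((3 * ρ) ^ d) := by
          rw [← ENNReal.ofReal_natCast, ← ENNReal.ofReal_pow (by positivity)]
          exact ENNReal.ofReal_le_ofReal (pow_le_pow_left₀ (by positivity) hN d)
  calc ∑' y : s, f y ≤ ∑' _ : s, c := ENNReal.tsum_le_tsum fun y => hf y y.2
    _ = s.encard * c := ENNReal.tsum_set_const s c
    _ ≤ _ := by gcongr

/-- Constant of the lattice tail bound: `6 ^ d` from counting lattice points in a dyadic shell,
`1 / (1 - 2 ^ (d - α))` from summing over the shells. -/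
noncomputable def tailConst (d : ℕ) (α : ℝ) : ℝ := 6 ^ d / (1 - 2 ^ ((d : ℝ) - α))

lemma tailConst_pos {α : ℝ} (hα : (d : ℝ) < α) : 0 < tailConst d α :=
  div_pos (by positivity) (sub_pos.mpr (Real.rpow_lt_one_of_one_lt_of_neg one_lt_two (by linarith)))

lemma tsum_euclNorm_rpow_neg_le {α : ℝ} (hα : (d : ℝ) < α) {R : ℝ} (hR : 1 ≤ R) :
    ∑' y : {y : Fin d → ℤ // R ≤ euclNorm y}, ENNReal.ofReal (euclNorm y.1 ^ (-α))
      ≤ ENNReal.ofReal (tailConst d α * R ^ ((d : ℝ) - α)) := by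
  set r : ℝ := 2 ^ ((d : ℝ) - α) with hr
  have hr0 : 0 ≤ r := by positivity
  have hr1 : r < 1 := Real.rpow_lt_one_of_one_lt_of_neg one_lt_two (by linarith)
  set shell : ℕ → Set (Fin d → ℤ) := fun k =>
    {y | R * 2 ^ k ≤ euclNorm y ∧ euclNorm y ≤ R * 2 ^ (k + 1)}
  have hcover : {y : Fin d → ℤ | R ≤ euclNorm y} ⊆ ⋃ k, shell k := by
    intro y hy
    obtain ⟨k, hk₁, hk₂⟩ :=
      exists_nat_pow_near ((one_le_div₀ (by linarith)).mpr (Set.mem_ofPred.mp hy)) one_lt_two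
    refine Set.mem_iUnion.mpr ⟨k, ?_, ?_⟩
    · rwa [le_div_iff₀' (by linarith)] at hk₁
    · rw [div_lt_iff₀' (by linarith)] at hk₂
      exact hk₂.le
  have hshell : ∀ k, ∑' y : shell k, ENNReal.ofReal (euclNorm y.1 ^ (-α))
      ≤ ENNReal.ofReal (6 ^ d * R ^ ((d : ℝ) - α) * r ^ k) := by
    intro k
    have hx : 0 < R * 2 ^ k := by positivity
    refine (tsum_le_of_euclNorm_le (ρ := R * 2 ^ (k + 1))
      (one_le_mul_of_one_le_of_one_le hR (one_le_pow₀ one_le_two)) (fun y hy => hy.2) _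
      (c := ENNReal.ofReal ((R * 2 ^ k) ^ (-α))) fun y hy =>
        ENNReal.ofReal_le_ofReal (Real.rpow_le_rpow_of_nonpos hx hy.1 (by linarith))).trans_eq ?_
    rw [← ENNReal.ofReal_mul (by positivity)]
    congr 1
    calc (3 * (R * 2 ^ (k + 1))) ^ d * (R * 2 ^ k) ^ (-α)
        = 6 ^ d * ((R * 2 ^ k) ^ (d : ℝ) * (R * 2 ^ k) ^ (-α)) := by
          rw [Real.rpow_natCast]; ring
      _ = 6 ^ d * (R ^ ((d : ℝ) - α) * ((2 : ℝ) ^ k) ^ ((d : ℝ) - α)) := by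
          rw [← Real.rpow_add hx, ← sub_eq_add_neg, Real.mul_rpow (by linarith) (by positivity)]
      _ = 6 ^ d * R ^ ((d : ℝ) - α) * r ^ k := by
          rw [← Real.rpow_pow_comm zero_le_two]; ring
  have hsum : Summable fun k : ℕ => 6 ^ d * R ^ ((d : ℝ) - α) * r ^ k :=
    (summable_geometric_of_lt_one hr0 hr1).mul_left _
  calc ∑' y : {y : Fin d → ℤ // R ≤ euclNorm y}, ENNReal.ofReal (euclNorm y.1 ^ (-α))
      ≤ ∑' y : ⋃ k, shell k, ENNReal.ofReal (euclNorm y.1 ^ (-α)) :=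
        ENNReal.tsum_mono_subtype (fun y => ENNReal.ofReal (euclNorm y ^ (-α))) hcover
    _ ≤ ∑' k, ∑' y : shell k, ENNReal.ofReal (euclNorm y.1 ^ (-α)) :=
        ENNReal.tsum_iUnion_le_tsum (fun y => ENNReal.ofReal (euclNorm y ^ (-α))) shell
    _ ≤ ∑' k, ENNReal.ofReal (6 ^ d * R ^ ((d : ℝ) - α) * r ^ k) :=
        ENNReal.tsum_le_tsum hshell
    _ = ENNReal.ofReal (tailConst d α * R ^ ((d : ℝ) - α)) := by
        rw [← ENNReal.ofReal_tsum_of_nonneg (fun _ => by positivity) hsum, tsum_mul_left,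
          tsum_geometric_of_lt_one hr0 hr1, tailConst, ← hr]
        congr 1
        ring

end Lattice

/-- The sum in (6.11) for a fixed outcome, with `t = λwW`. -/
noncomputable def expTailSum (d : ℕ) (α t S : ℝ) : ℝ≥0∞ :=
  ∑' y : {y : Fin d → ℤ // S ≤ euclNorm y},
    ENNReal.ofReal (1 - Real.exp (-(t * euclNorm y.1 ^ (-α))))

section expTailSum

variable {d : ℕ} {α : ℝ}

lemma expTailSum_le_mul (hα : (d : ℝ) < α) {S : ℝ} (hS : 1 ≤ S) (t : ℝ) :
    expTailSum d α t S ≤ ENNReal.ofReal (t * (tailConst d α * S ^ ((d : ℝ) - α))) := by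
  have hterm : ∀ y : {y : Fin d → ℤ // S ≤ euclNorm y},
      ENNReal.ofReal (1 - Real.exp (-(t * euclNorm y.1 ^ (-α))))
        ≤ ENNReal.ofReal t * ENNReal.ofReal (euclNorm y.1 ^ (-α)) := fun y => by
    rw [← ENNReal.ofReal_mul' (Real.rpow_nonneg (euclNorm_nonneg _) _)]
    exact ENNReal.ofReal_le_ofReal
      (by linarith [Real.add_one_le_exp (-(t * euclNorm y.1 ^ (-α)))])
  calc expTailSum d α t S
      ≤ ∑' y : {y : Fin d → ℤ // S ≤ euclNorm y},
          ENNReal.ofReal t * ENNReal.ofReal (euclNorm y.1 ^ (-α)) := ENNReal.tsum_le_tsum hterm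
    _ = ENNReal.ofReal t * ∑' y : {y : Fin d → ℤ // S ≤ euclNorm y},
          ENNReal.ofReal (euclNorm y.1 ^ (-α)) := ENNReal.tsum_mul_left
    _ ≤ ENNReal.ofReal t * ENNReal.ofReal (tailConst d α * S ^ ((d : ℝ) - α)) := by
        gcongr; exact tsum_euclNorm_rpow_neg_le hα hS
    _ = _ := by rw [← ENNReal.ofReal_mul' (by have := tailConst_pos hα; positivity)]

lemma expTailSum_le_rpow (hα : (d : ℝ) < α) {S t : ℝ} (hS : 1 ≤ S) (ht : S ^ α ≤ t) :
    expTailSum d α t S ≤ ENNReal.ofReal ((tailConst d α + 3 ^ d) * t ^ ((d : ℝ) / α)) := by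
  have hα0 : 0 < α := (Nat.cast_nonneg d).trans_lt hα
  have ht0 : 0 < t := (by positivity : 0 < S ^ α).trans_le ht
  obtain ⟨ρ, hρ⟩ : ∃ ρ, ρ = t ^ α⁻¹ := ⟨_, rfl⟩
  have hSρ : S ≤ ρ :=
    calc S = (S ^ α) ^ α⁻¹ := (Real.rpow_rpow_inv (by linarith) hα0.ne').symm
      _ ≤ ρ := hρ ▸ Real.rpow_le_rpow (by positivity) ht (by positivity)
  have hρ1 : 1 ≤ ρ := hS.trans hSρ
  have hρ_pow : ρ ^ d = t ^ ((d : ℝ) / α) := by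
    rw [hρ, ← Real.rpow_natCast, ← Real.rpow_mul ht0.le, inv_mul_eq_div]
  have hρ_rpow : t * ρ ^ ((d : ℝ) - α) = t ^ ((d : ℝ) / α) := by
    rw [hρ, ← Real.rpow_mul ht0.le, inv_mul_eq_div, sub_div, div_self hα0.ne',
      Real.rpow_sub_one ht0.ne', mul_div_cancel₀ _ ht0.ne']
  let f : (Fin d → ℤ) → ℝ≥0∞ := fun y =>
    ENNReal.ofReal (1 - Real.exp (-(t * euclNorm y ^ (-α))))
  have hf : ∀ y, f y ≤ 1 := fun y =>
    ENNReal.ofReal_le_one.mpr (by linarith [Real.exp_nonneg (-(t * euclNorm y ^ (-α)))])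
  calc expTailSum d α t S
      ≤ ∑' y : ↑({y : Fin d → ℤ | ρ ≤ euclNorm y} ∪ {y : Fin d → ℤ | euclNorm y ≤ ρ}), f y :=
        ENNReal.tsum_mono_subtype f fun y _ => le_total ρ (euclNorm y)
    _ ≤ ∑' y : {y : Fin d → ℤ | ρ ≤ euclNorm y}, f y +
          ∑' y : {y : Fin d → ℤ | euclNorm y ≤ ρ}, f y :=
        ENNReal.tsum_union_le f _ _
    _ ≤ ENNReal.ofReal (t * (tailConst d α * ρ ^ ((d : ℝ) - α))) +
          ENNReal.ofReal ((3 * ρ) ^ d) * 1 :=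
        add_le_add (expTailSum_le_mul hα hρ1 t)
          (tsum_le_of_euclNorm_le hρ1 (fun _ hy => hy) f fun y _ => hf y)
    _ = ENNReal.ofReal ((tailConst d α + 3 ^ d) * t ^ ((d : ℝ) / α)) := by
        rw [mul_one, ← ENNReal.ofReal_add (by have := tailConst_pos hα; positivity)
          (by positivity), mul_pow, hρ_pow, mul_left_comm, hρ_rpow, add_mul]

lemma expTailSum_mul_le (hα : (d : ℝ) < α) {S a : ℝ} (hS : 1 ≤ S) (ha : 0 < a) (b : ℝ) :
    expTailSum d α (a * b) S ≤ ENNReal.ofReal (tailConst d α + 3 ^ d) *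
      (ENNReal.ofReal (a * S ^ ((d : ℝ) - α)) *
          ENNReal.ofReal (if a * b ≤ S ^ α then b else 0) +
        ENNReal.ofReal (a ^ ((d : ℝ) / α)) *
          ENNReal.ofReal (if S ^ α ≤ a * b then b ^ ((d : ℝ) / α) else 0)) := by
  have hK := tailConst_pos hα
  have hS0 : 0 ≤ S ^ ((d : ℝ) - α) := by positivity
  rcases le_or_gt (a * b) (S ^ α) with h | h
  · rw [if_pos h]
    calc expTailSum d α (a * b) S
        ≤ ENNReal.ofReal (a * b * (tailConst d α * S ^ ((d : ℝ) - α))) :=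
          expTailSum_le_mul hα hS _
      _ = ENNReal.ofReal (tailConst d α) *
            (ENNReal.ofReal (a * S ^ ((d : ℝ) - α)) * ENNReal.ofReal b) := by
          rw [← ENNReal.ofReal_mul (by positivity), ← ENNReal.ofReal_mul hK.le]
          ring_nf
      _ ≤ _ := by
          gcongr
          · linarith [(by positivity : (0 : ℝ) ≤ 3 ^ d)]
          · exact le_self_add
  · have hb : 0 < b := pos_of_mul_pos_right ((by positivity : 0 < S ^ α).trans h) ha.le
    rw [if_neg h.not_ge, if_pos h.le, ENNReal.ofReal_zero, mul_zero, zero_add,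
      ← ENNReal.ofReal_mul (by positivity), ← ENNReal.ofReal_mul (by positivity),
      ← Real.mul_rpow ha.le hb.le]
    exact expTailSum_le_rpow hα hS h.le

end expTailSum

theorem stmt7_general (d : ℕ) (α : ℝ) (hα : (d : ℝ) < α) :
    ∃ C > (0 : ℝ),
      ∀ lam : ℝ, 0 < lam →
      ∀ (Ω : Type) [MeasurableSpace Ω] (μ : Measure Ω) [IsProbabilityMeasure μ]
        (W : Ω → ℝ), Measurable W → (∀ᵐ ω ∂μ, 1 ≤ W ω) →
      ∀ w S : ℝ, 1 ≤ w → 2 ≤ S →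
      (∑' y : {y : Fin d → ℤ // S ≤ euclNorm y},
          ∫⁻ ω, ENNReal.ofReal
            (1 - Real.exp (-(lam * w * W ω * euclNorm y.1 ^ (-α)))) ∂μ)
        ≤ ENNReal.ofReal C *
            (ENNReal.ofReal (lam * w * S ^ ((d : ℝ) - α)) *
                ∫⁻ ω, ENNReal.ofReal
                  (if lam * w * W ω ≤ S ^ α then W ω else 0) ∂μ +
              ENNReal.ofReal ((lam * w) ^ ((d : ℝ) / α)) *
                ∫⁻ ω, ENNReal.ofReal
                  (if S ^ α ≤ lam * w * W ω then W ω ^ ((d : ℝ) / α) else 0) ∂μ) := by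
  refine ⟨tailConst d α + 3 ^ d, by have := tailConst_pos hα; positivity, ?_⟩
  intro lam hlam Ω _ μ _ W hW _ w S hw hS
  have hlw : 0 < lam * w := by positivity
  rw [← lintegral_tsum fun y => by fun_prop]
  calc ∫⁻ ω, expTailSum d α (lam * w * W ω) S ∂μ
      ≤ _ := lintegral_mono fun ω => expTailSum_mul_le hα (by linarith) hlw (W ω)
    _ = _ := by
        rw [lintegral_const_mul' _ _ ENNReal.ofReal_ne_top, lintegral_add_left
          (((Measurable.ite (measurableSet_le (hW.const_mul _) measurable_const) hW
            measurable_const).ennreal_ofReal).const_mul _),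
          lintegral_const_mul' _ _ ENNReal.ofReal_ne_top,
          lintegral_const_mul' _ _ ENNReal.ofReal_ne_top]

/-- **(6.11).** For `d ≥ 1`, `α > d` there is `C > 0`, depending only on `d, α`, such that
for every `λ > 0`, every random variable `W ≥ 1` a.s. and all `w ≥ 1`, `S ≥ 2`:
`∑_{‖y‖ ≥ S} E[1 - exp(-λ w W ‖y‖^{-α})]
  ≤ C (λ w S^{d-α} E[W 1{λwW ≤ S^α}] + (λw)^{d/α} E[W^{d/α} 1{λwW ≥ S^α}])`. -/
theorem stmt7 (d : ℕ) (hd : 1 ≤ d) (α : ℝ) (hα : (d : ℝ) < α) :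
    ∃ C > (0 : ℝ),
      ∀ lam : ℝ, 0 < lam →
      ∀ (Ω : Type) [MeasurableSpace Ω] (μ : Measure Ω) [IsProbabilityMeasure μ]
        (W : Ω → ℝ), Measurable W → (∀ᵐ ω ∂μ, 1 ≤ W ω) →
      ∀ w S : ℝ, 1 ≤ w → 2 ≤ S →
      (∑' y : {y : Fin d → ℤ // S ≤ euclNorm y},
          ∫⁻ ω, ENNReal.ofReal
            (1 - Real.exp (-(lam * w * W ω * euclNorm y.1 ^ (-α)))) ∂μ)
        ≤ ENNReal.ofReal C *
            (ENNReal.ofReal (lam * w * S ^ ((d : ℝ) - α)) *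
                ∫⁻ ω, ENNReal.ofReal
                  (if lam * w * W ω ≤ S ^ α then W ω else 0) ∂μ +
              ENNReal.ofReal ((lam * w) ^ ((d : ℝ) / α)) *
                ∫⁻ ω, ENNReal.ofReal
                  (if S ^ α ≤ lam * w * W ω then W ω ^ ((d : ℝ) / α) else 0) ∂μ) :=
  stmt7_general d α hα
end

section
/- Let (L_{k,j})_{k≥1, j≥1} be a doubly indexed family of independent, identically distributed nonnegative real random variables with common law μ, let F(t) := μ((−∞,t]) and, for q ∈ (0,1], let ℓ_q := inf{t ∈ ℝ : F(t) ≥ q}. Let (a_k)_{k≥1} be positive integers. (i) If ∑_{k=1}^∞ a_k/a_{k+1} < ∞, then almost surely for all sufficiently large k: min_{1≤j≤a_k} L_{k,j} ≥ ℓ_{1/a_{k+1}}. (ii) If ∑_{k=1}^∞ exp(−a_{k+1}/a_k) < ∞, then almost surely for all sufficiently large k: min_{1≤j≤a_{k+1}} L_{k,j} ≤ ℓ_{1/a_k}. -/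
/-!
Both parts are first Borel–Cantelli arguments. For (i), `ν(-∞, ℓ_q) ≤ q`, so a union bound
shows that one of `L_{k,1}, …, L_{k,a_k}` falls below `ℓ_{1/a_{k+1}}` with probability at most
`a_k / a_{k+1}`. For (ii), right continuity of `F` gives `F(ℓ_q) ≥ q` for `q < 1`, so by
independence all of `L_{k,1}, …, L_{k,a_{k+1}}` exceed `ℓ_{1/a_k}` with probability at most
`(1 - 1/a_k)^{a_{k+1}} ≤ exp(-a_{k+1}/a_k)`.
-/

open MeasureTheory ProbabilityTheory Filter Topology Set
open scoped ENNReal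

section GeneralizedInverse

variable {F : ℝ → ℝ} {q : ℝ}

lemma bddBelow_setOf_le_of_tendsto_atBot (hF : Tendsto F atBot (𝓝 0)) (hq : 0 < q) :
    BddBelow {t | q ≤ F t} := by
  obtain ⟨T, hT⟩ := eventually_atBot.1 (hF.eventually_lt_const hq)
  exact ⟨T, fun t ht => le_of_not_gt fun htT => (hT t htT.le).not_ge ht⟩

lemma Monotone.leftLim_csInf_setOf_le (hF : Monotone F) (hbdd : BddBelow {t | q ≤ F t}) :
    Function.leftLim F (sInf {t | q ≤ F t}) ≤ q :=
  _root_.le_of_tendsto (hF.tendsto_leftLim _) <| eventually_nhdsWithin_of_forall fun _ ht =>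
    (not_le.1 (notMem_of_lt_csInf (s := {t | q ≤ F t}) ht hbdd)).le

lemma StieltjesFunction.le_apply_csInf_setOf_le (f : StieltjesFunction ℝ)
    (hne : {t | q ≤ f t}.Nonempty) :
    q ≤ f (sInf {t | q ≤ f t}) := by
  refine ge_of_tendsto ((f.right_continuous _).mono Ioi_subset_Ici_self)
    (eventually_nhdsWithin_of_forall fun t ht => ?_)
  obtain ⟨s, hs, hst⟩ := exists_lt_of_csInf_lt hne ht
  exact hs.trans (f.mono hst.le)

end GeneralizedInverse

noncomputable def lowerQuantile (ν : Measure ℝ) (q : ℝ) : ℝ :=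
  sInf {t : ℝ | q ≤ (ν (Iic t)).toReal}

section LowerQuantile

variable (ν : Measure ℝ) [IsProbabilityMeasure ν] {q : ℝ}

lemma lowerQuantile_eq_csInf_cdf : lowerQuantile ν q = sInf {t | q ≤ cdf ν t} := by
  simp only [lowerQuantile, cdf_eq_real, measureReal_def]

lemma measure_Iio_lowerQuantile_le (hq : 0 < q) :
    ν (Iio (lowerQuantile ν q)) ≤ ENNReal.ofReal q := by
  have hIio := (cdf ν).measure_Iio (tendsto_cdf_atBot ν) (lowerQuantile ν q)
  rw [measure_cdf, sub_zero] at hIio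
  rw [hIio, lowerQuantile_eq_csInf_cdf]
  exact ENNReal.ofReal_le_ofReal <| (monotone_cdf ν).leftLim_csInf_setOf_le
    (bddBelow_setOf_le_of_tendsto_atBot (tendsto_cdf_atBot ν) hq)

lemma measureReal_Ioi_lowerQuantile_le (hq : q < 1) :
    ν.real (Ioi (lowerQuantile ν q)) ≤ 1 - q := by
  have hne : {t | q ≤ cdf ν t}.Nonempty :=
    ((tendsto_cdf_atTop ν).eventually_const_lt hq).exists.imp fun _ h => h.le
  have hF := (cdf ν).le_apply_csInf_setOf_le hne
  rw [← compl_Iic, probReal_compl_eq_one_sub measurableSet_Iic, ← cdf_eq_real,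
    lowerQuantile_eq_csInf_cdf]
  linarith

end LowerQuantile

section IdenticallyDistributed

variable {Ω ι : Type*} [MeasurableSpace Ω] {μ : Measure Ω}

lemma measure_preimage_of_map_eq {α : Type*} [MeasurableSpace α] {ν : Measure α} [NeZero ν]
    {X : Ω → α} (h : μ.map X = ν) {s : Set α} (hs : MeasurableSet s) :
    μ (X ⁻¹' s) = ν s := by
  have hX : AEMeasurable X μ := .of_map_ne_zero (by rw [h]; exact NeZero.ne ν)
  rw [← h, Measure.map_apply_of_aemeasurable hX hs]

variable {ν : Measure ℝ} [NeZero ν] {X : ι → Ω → ℝ}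

lemma measure_inf'_lt_le_card_mul (hX : ∀ j, μ.map (X j) = ν) (J : Finset ι) (hJ : J.Nonempty)
    (t : ℝ) :
    μ {ω | J.inf' hJ (fun j => X j ω) < t} ≤ J.card * ν (Iio t) := by
  have hset : {ω | J.inf' hJ (fun j => X j ω) < t} = ⋃ j ∈ J, X j ⁻¹' Iio t := by
    ext; simp [Finset.inf'_lt_iff]
  calc μ {ω | J.inf' hJ (fun j => X j ω) < t} ≤ ∑ j ∈ J, μ (X j ⁻¹' Iio t) :=
        hset ▸ measure_biUnion_finset_le _ _
    _ = J.card * ν (Iio t) := by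
        simp [measure_preimage_of_map_eq (hX _) measurableSet_Iio]

lemma measure_lt_inf'_eq_pow (hind : iIndepFun X μ) (hX : ∀ j, μ.map (X j) = ν)
    (J : Finset ι) (hJ : J.Nonempty) (t : ℝ) :
    μ {ω | t < J.inf' hJ (fun j => X j ω)} = ν (Ioi t) ^ J.card := by
  have hset : {ω | t < J.inf' hJ (fun j => X j ω)} = ⋂ j ∈ J, X j ⁻¹' Ioi t := by
    ext; simp [Finset.lt_inf'_iff]
  rw [hset, hind.measure_inter_preimage_eq_mul J (fun _ _ => measurableSet_Ioi)]
  simp [measure_preimage_of_map_eq (hX _) measurableSet_Ioi]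

end IdenticallyDistributed

lemma ae_eventually_notMem_of_summable {Ω : Type*} [MeasurableSpace Ω] {μ : Measure Ω}
    [IsFiniteMeasure μ] {s : ℕ → Set Ω} {f : ℕ → ℝ} (hf : Summable f)
    (hs : ∀ᶠ k in atTop, μ (s k) ≤ ENNReal.ofReal (f k)) :
    ∀ᵐ ω ∂μ, ∀ᶠ k in atTop, ω ∉ s k := by
  have hreal : Summable fun k => μ.real (s k) :=
    hf.abs.of_norm_bounded_eventually_nat <| hs.mono fun k hk => by
      rw [Real.norm_of_nonneg measureReal_nonneg]
      exact ENNReal.toReal_le_of_le_ofReal (abs_nonneg _)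
        (hk.trans (ENNReal.ofReal_le_ofReal (le_abs_self _)))
  refine ae_eventually_notMem ?_
  rw [← funext fun k => ofReal_measureReal (μ := μ) (s := s k),
    ← ENNReal.ofReal_tsum_of_nonneg (fun _ => measureReal_nonneg) hreal]
  exact ENNReal.ofReal_ne_top

lemma pow_le_exp_neg_mul_of_le_one_sub {r x : ℝ} (hr : 0 ≤ r) (h : r ≤ 1 - x) (m : ℕ) :
    r ^ m ≤ Real.exp (-(m * x)) :=
  calc r ^ m ≤ Real.exp (-x) ^ m := pow_le_pow_left₀ hr (h.trans (Real.one_sub_le_exp_neg x)) m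
    _ = Real.exp (-(m * x)) := by rw [← Real.exp_nat_mul, mul_neg]

lemma eventually_two_le_of_summable_exp_neg_div {a : ℕ → ℕ} (hapos : ∀ k, 0 < a k)
    (hsum : Summable fun k => Real.exp (-((a (k + 1) : ℝ) / (a k : ℝ)))) :
    ∀ᶠ k in atTop, 2 ≤ a k := by
  have hsucc : ∀ᶠ k in atTop, a (k + 1) ∈ {m | 2 ≤ m} := by
    filter_upwards [hsum.tendsto_atTop_zero.eventually_lt_const (Real.exp_pos (-1))] with k hk
    have hak : (0 : ℝ) < a k := by exact_mod_cast hapos k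
    have hratio : (1 : ℝ) < a (k + 1) / a k := by simpa using Real.exp_lt_exp.1 hk
    have hgrow : a k < a (k + 1) := by exact_mod_cast (one_lt_div hak).1 hratio
    have := hapos k
    show 2 ≤ a (k + 1)
    omega
  exact tendsto_principal.1 ((tendsto_add_atTop_iff_nat 1).1 (tendsto_principal.2 hsucc))

section BorelCantelli

variable {Ω : Type*} [MeasurableSpace Ω] {μ : Measure Ω} [IsProbabilityMeasure μ]
  {L : ℕ → ℕ → Ω → ℝ} {ν : Measure ℝ} [IsProbabilityMeasure ν] {a : ℕ → ℕ}

theorem ae_eventually_lowerQuantile_le_inf' (hid : ∀ k j, μ.map (L k j) = ν)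
    (hapos : ∀ k, 0 < a k) (hsum : Summable fun k => (a k : ℝ) / (a (k + 1) : ℝ)) :
    ∀ᵐ ω ∂μ, ∀ᶠ k in atTop, lowerQuantile ν (1 / a (k + 1)) ≤
      (Finset.Icc 1 (a k)).inf' (Finset.nonempty_Icc.mpr (hapos k)) (fun j => L k j ω) := by
  refine (ae_eventually_notMem_of_summable (s := fun k => {ω | (Finset.Icc 1 (a k)).inf'
      (Finset.nonempty_Icc.mpr (hapos k)) (fun j => L k j ω) < lowerQuantile ν (1 / a (k + 1))})
    hsum (Eventually.of_forall fun k => ?_)).mono fun _ hω => hω.mono fun _ hk => not_lt.1 hk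
  have := hapos (k + 1)
  calc _ ≤ (a k : ℝ≥0∞) * ν (Iio (lowerQuantile ν (1 / a (k + 1)))) := by
        simpa using measure_inf'_lt_le_card_mul (hid k) _ (Finset.nonempty_Icc.mpr (hapos k)) _
    _ ≤ a k * ENNReal.ofReal (1 / a (k + 1)) := by
        gcongr; exact measure_Iio_lowerQuantile_le ν (by positivity)
    _ = ENNReal.ofReal (a k / a (k + 1)) := by
        rw [← ENNReal.ofReal_natCast, ← ENNReal.ofReal_mul (by positivity), mul_one_div]

theorem ae_eventually_inf'_le_lowerQuantile
    (hindep : iIndepFun (fun p : ℕ × ℕ => L p.1 p.2) μ) (hid : ∀ k j, μ.map (L k j) = ν)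
    (hapos : ∀ k, 0 < a k)
    (hsum : Summable fun k => Real.exp (-((a (k + 1) : ℝ) / (a k : ℝ)))) :
    ∀ᵐ ω ∂μ, ∀ᶠ k in atTop,
      (Finset.Icc 1 (a (k + 1))).inf' (Finset.nonempty_Icc.mpr (hapos (k + 1)))
        (fun j => L k j ω) ≤ lowerQuantile ν (1 / a k) := by
  refine (ae_eventually_notMem_of_summable (s := fun k => {ω | lowerQuantile ν (1 / a k) <
      (Finset.Icc 1 (a (k + 1))).inf' (Finset.nonempty_Icc.mpr (hapos (k + 1)))
        (fun j => L k j ω)}) hsum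
    ((eventually_two_le_of_summable_exp_neg_div hapos hsum).mono fun k hk => ?_)).mono
    fun _ hω => hω.mono fun _ hk => not_lt.1 hk
  have hrow : iIndepFun (L k) μ := hindep.precomp (g := Prod.mk k) (Prod.mk_right_injective k)
  have hq : 1 / (a k : ℝ) < 1 := by
    rw [div_lt_one (by positivity)]
    exact_mod_cast hk
  have hIoi := measureReal_Ioi_lowerQuantile_le ν hq
  rw [measure_lt_inf'_eq_pow hrow (hid k), Nat.card_Icc, Nat.add_sub_cancel,
    ← ofReal_measureReal, ← ENNReal.ofReal_pow measureReal_nonneg]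
  exact ENNReal.ofReal_le_ofReal
    ((pow_le_exp_neg_mul_of_le_one_sub measureReal_nonneg hIoi _).trans_eq (by rw [mul_one_div]))

end BorelCantelli

theorem stmt9_general {Ω : Type*} [MeasurableSpace Ω] (μ : Measure Ω) [IsProbabilityMeasure μ]
    (L : ℕ → ℕ → Ω → ℝ)
    (hindep : iIndepFun (fun p : ℕ × ℕ => L p.1 p.2) μ)
    (ν : Measure ℝ) [IsProbabilityMeasure ν]
    (hid : ∀ k j, Measure.map (L k j) μ = ν)
    (a : ℕ → ℕ) (hapos : ∀ k, 0 < a k) :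
    (Summable (fun k : ℕ => (a k : ℝ) / (a (k + 1) : ℝ)) →
      ∀ᵐ ω ∂μ, ∀ᶠ k in atTop,
        sInf {t : ℝ | (1 : ℝ) / (a (k + 1) : ℝ) ≤ (ν (Set.Iic t)).toReal} ≤
          (Finset.Icc 1 (a k)).inf' (Finset.nonempty_Icc.mpr (hapos k))
            (fun j => L k j ω)) ∧
    (Summable (fun k : ℕ => Real.exp (-((a (k + 1) : ℝ) / (a k : ℝ)))) →
      ∀ᵐ ω ∂μ, ∀ᶠ k in atTop,
        (Finset.Icc 1 (a (k + 1))).inf' (Finset.nonempty_Icc.mpr (hapos (k + 1)))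
            (fun j => L k j ω) ≤
          sInf {t : ℝ | (1 : ℝ) / (a k : ℝ) ≤ (ν (Set.Iic t)).toReal}) :=
  ⟨ae_eventually_lowerQuantile_le_inf' hid hapos,
    ae_eventually_inf'_le_lowerQuantile hindep hid hapos⟩

/-- **(5.24)–(5.25) and (6.28)–(6.29).** For i.i.d. nonnegative `(L_{k,j})` with common
law `ν`, CDF `F(t) = ν(-∞,t]`, generalized inverse `ℓ_q = inf{t : F(t) ≥ q}`, and positive
integers `(a_k)`:
(i) if `∑_k a_k/a_{k+1} < ∞` then a.s. eventually `min_{1≤j≤a_k} L_{k,j} ≥ ℓ_{1/a_{k+1}}`;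
(ii) if `∑_k exp(-a_{k+1}/a_k) < ∞` then a.s. eventually `min_{1≤j≤a_{k+1}} L_{k,j} ≤ ℓ_{1/a_k}`. -/
theorem stmt9 {Ω : Type*} [MeasurableSpace Ω] (μ : Measure Ω) [IsProbabilityMeasure μ]
    (L : ℕ → ℕ → Ω → ℝ) (hmeas : ∀ k j, Measurable (L k j))
    (hnonneg : ∀ k j ω, 0 ≤ L k j ω)
    (hindep : iIndepFun (fun p : ℕ × ℕ => L p.1 p.2) μ)
    (ν : Measure ℝ) [IsProbabilityMeasure ν]
    (hid : ∀ k j, Measure.map (L k j) μ = ν)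
    (a : ℕ → ℕ) (hapos : ∀ k, 0 < a k) :
    (Summable (fun k : ℕ => (a k : ℝ) / (a (k + 1) : ℝ)) →
      ∀ᵐ ω ∂μ, ∀ᶠ k in atTop,
        sInf {t : ℝ | (1 : ℝ) / (a (k + 1) : ℝ) ≤ (ν (Set.Iic t)).toReal} ≤
          (Finset.Icc 1 (a k)).inf' (Finset.nonempty_Icc.mpr (hapos k))
            (fun j => L k j ω)) ∧
    (Summable (fun k : ℕ => Real.exp (-((a (k + 1) : ℝ) / (a k : ℝ)))) →
      ∀ᵐ ω ∂μ, ∀ᶠ k in atTop,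
        (Finset.Icc 1 (a (k + 1))).inf' (Finset.nonempty_Icc.mpr (hapos (k + 1)))
            (fun j => L k j ω) ≤
          sInf {t : ℝ | (1 : ℝ) / (a k : ℝ) ≤ (ν (Set.Iic t)).toReal}) :=
  stmt9_general μ L hindep ν hid a hapos
end

section
/- Let X_1, …, X_n be independent, identically distributed nonnegative real random variables on a probability space, let t₀ > 0 and set p := P(X_1 ≤ t₀). Then P( X_1 + ⋯ + X_n ≤ n·t₀/2 ) ≤ 2^n · p^{n/2}, where p^{n/2} denotes the real power p^{(n/2)}. -/
open MeasureTheory ProbabilityTheory Finset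

/-!
If `∑ X i ≤ n t / 2` with all `X i ≥ 0`, the indices with `X i > t` contribute more than `t`
each, so at least `n / 2` of the `X i` are `≤ t`. A union bound over the (at most `2 ^ n`)
index sets `S` with `n ≤ 2 |S|`, together with
`P(X i ≤ t for all i ∈ S) = p ^ |S| ≤ p ^ (n / 2)` by independence, gives the bound.
-/

theorem Fintype.card_le_two_mul_card_filter_le_of_sum_le {ι : Type*} [Fintype ι] [DecidableEq ι]
    {x : ι → ℝ} {t : ℝ} (ht : 0 < t) (hx : ∀ i, 0 ≤ x i)
    (hsum : ∑ i, x i ≤ Fintype.card ι * t / 2) :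
    Fintype.card ι ≤ 2 * #{i | x i ≤ t} := by
  set S : Finset ι := {i | x i ≤ t}
  have hcompl : (#Sᶜ : ℝ) * t ≤ ∑ i, x i :=
    calc (#Sᶜ : ℝ) * t = #Sᶜ • t := (nsmul_eq_mul _ _).symm
      _ ≤ ∑ i ∈ Sᶜ, x i :=
          card_nsmul_le_sum _ _ _ fun i hi => (not_le.mp (by simpa [S] using hi)).le
      _ ≤ ∑ i, x i := sum_le_sum_of_subset_of_nonneg (subset_univ _) fun i _ _ => hx i
  rw [card_compl, Nat.cast_sub (card_le_univ S)] at hcompl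
  have : (Fintype.card ι : ℝ) ≤ 2 * #S := by nlinarith
  exact_mod_cast this

theorem setOf_sum_le_subset_biUnion_iInter {Ω ι : Type*} [Fintype ι] [DecidableEq ι]
    {X : ι → Ω → ℝ} {t : ℝ} (ht : 0 < t) (hX : ∀ i ω, 0 ≤ X i ω) :
    {ω | ∑ i, X i ω ≤ Fintype.card ι * t / 2} ⊆
      ⋃ S ∈ ({S | Fintype.card ι ≤ 2 * #S} : Finset (Finset ι)),
        ⋂ i ∈ S, X i ⁻¹' Set.Iic t := by
  intro ω hω
  simp only [Set.mem_iUnion, Set.mem_iInter, Set.mem_preimage, Set.mem_Iic, mem_filter_univ]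
  exact ⟨_, Fintype.card_le_two_mul_card_filter_le_of_sum_le ht (hX · ω) hω,
    fun i hi => (mem_filter.mp hi).2⟩

theorem ProbabilityTheory.iIndepFun.measure_biInter_preimage_eq_pow {Ω ι β : Type*}
    [MeasurableSpace Ω] [MeasurableSpace β] {μ : Measure Ω} {ν : Measure β} {X : ι → Ω → β}
    (hindep : iIndepFun X μ) (hmeas : ∀ i, Measurable (X i)) (hid : ∀ i, μ.map (X i) = ν)
    (S : Finset ι) {A : Set β} (hA : MeasurableSet A) :
    μ (⋂ i ∈ S, X i ⁻¹' A) = ν A ^ #S := by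
  rw [hindep.measure_inter_preimage_eq_mul S fun _ _ => hA, ← prod_const]
  refine prod_congr rfl fun i _ => ?_
  rw [← hid i, Measure.map_apply (hmeas i) hA]

theorem ENNReal.pow_le_rpow_half {p : ENNReal} (hp : p ≤ 1) {n k : ℕ} (hnk : n ≤ 2 * k) :
    p ^ k ≤ p ^ ((n : ℝ) / 2) := by
  rw [← ENNReal.rpow_natCast]
  refine ENNReal.rpow_le_rpow_of_exponent_ge hp ?_
  rw [div_le_iff₀ two_pos]
  exact_mod_cast (mul_comm k 2 ▸ hnk)

theorem ProbabilityTheory.iIndepFun.measure_sum_le_card_mul_half_le {Ω ι : Type*}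
    [MeasurableSpace Ω] [Fintype ι] {μ : Measure Ω} {ν : Measure ℝ} [IsProbabilityMeasure ν]
    {X : ι → Ω → ℝ}
    (hindep : iIndepFun X μ) (hmeas : ∀ i, Measurable (X i)) (hid : ∀ i, μ.map (X i) = ν)
    (hX : ∀ i ω, 0 ≤ X i ω) {t : ℝ} (ht : 0 < t) :
    μ {ω | ∑ i, X i ω ≤ Fintype.card ι * t / 2} ≤
      2 ^ Fintype.card ι * ν (Set.Iic t) ^ ((Fintype.card ι : ℝ) / 2) := by
  classical
  set F : Finset (Finset ι) := {S | Fintype.card ι ≤ 2 * #S}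
  calc μ {ω | ∑ i, X i ω ≤ Fintype.card ι * t / 2}
      ≤ μ (⋃ S ∈ F, ⋂ i ∈ S, X i ⁻¹' Set.Iic t) :=
        measure_mono (setOf_sum_le_subset_biUnion_iInter ht hX)
    _ ≤ ∑ S ∈ F, μ (⋂ i ∈ S, X i ⁻¹' Set.Iic t) := measure_biUnion_finset_le _ _
    _ = ∑ S ∈ F, ν (Set.Iic t) ^ #S := by
        simp only [hindep.measure_biInter_preimage_eq_pow hmeas hid _ measurableSet_Iic]
    _ ≤ ∑ _S ∈ F, ν (Set.Iic t) ^ ((Fintype.card ι : ℝ) / 2) :=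
        sum_le_sum fun S hS => ENNReal.pow_le_rpow_half prob_le_one (mem_filter.mp hS).2
    _ ≤ 2 ^ Fintype.card ι * ν (Set.Iic t) ^ ((Fintype.card ι : ℝ) / 2) := by
        rw [sum_const, nsmul_eq_mul]
        gcongr
        exact_mod_cast (card_le_univ F).trans_eq (by simp)

theorem stmt10_general {Ω : Type*} [MeasurableSpace Ω] (μ : Measure Ω)
    (n : ℕ) (X : Fin n → Ω → ℝ) (hmeas : ∀ i, Measurable (X i))
    (hnonneg : ∀ i ω, 0 ≤ X i ω)
    (hindep : iIndepFun X μ)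
    (ν : Measure ℝ) [IsProbabilityMeasure ν] (hid : ∀ i, Measure.map (X i) μ = ν)
    (t₀ : ℝ) (ht₀ : 0 < t₀) :
    μ {ω | ∑ i, X i ω ≤ (n : ℝ) * t₀ / 2}
      ≤ ENNReal.ofReal (2 ^ n * (ν (Set.Iic t₀)).toReal ^ ((n : ℝ) / 2)) := by
  have h := hindep.measure_sum_le_card_mul_half_le hmeas hid hnonneg ht₀
  rw [Fintype.card_fin] at h
  refine h.trans_eq ?_
  rw [ENNReal.ofReal_mul (by positivity), ENNReal.toReal_rpow, ENNReal.ofReal_toReal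
    (ENNReal.rpow_ne_top_of_nonneg (by positivity) (measure_ne_top _ _)),
    ENNReal.ofReal_pow zero_le_two, ENNReal.ofReal_ofNat]

/-- **(3.10).** For i.i.d. nonnegative `X_1, …, X_n` with common law `ν`, `t₀ > 0` and
`p := P(X_1 ≤ t₀)`, one has `P(X_1 + ⋯ + X_n ≤ n t₀ / 2) ≤ 2^n p^{n/2}`. -/
theorem stmt10 {Ω : Type*} [MeasurableSpace Ω] (μ : Measure Ω) [IsProbabilityMeasure μ]
    (n : ℕ) (X : Fin n → Ω → ℝ) (hmeas : ∀ i, Measurable (X i))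
    (hnonneg : ∀ i ω, 0 ≤ X i ω)
    (hindep : iIndepFun X μ)
    (ν : Measure ℝ) [IsProbabilityMeasure ν] (hid : ∀ i, Measure.map (X i) μ = ν)
    (t₀ : ℝ) (ht₀ : 0 < t₀) :
    μ {ω | ∑ i, X i ω ≤ (n : ℝ) * t₀ / 2}
      ≤ ENNReal.ofReal (2 ^ n * (ν (Set.Iic t₀)).toReal ^ ((n : ℝ) / 2)) :=
  stmt10_general μ n X hmeas hnonneg hindep ν hid t₀ ht₀
end

section
/- Let g : ℝ → ℝ be nonnegative and nondecreasing on [0,1], let ξ > 1, and suppose ∑_{k=1}^∞ g(exp(−ξ^k)) = ∞. Then for every b > 0 and every δ > 0 there exists ε₀ ∈ (0,1) such that for every ε ∈ (0,ε₀), setting C := (1−ε)·ξ (so C > 1), for all sufficiently large n the denominator below is positive and limsup_{n→∞} ( ∑_{k=1}^n g(exp(−b·C^k)) ) / ( ∑_{k=1}^n g(exp(−ξ^k)) ) ≤ 1 + δ. -/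
/-!
Write `α = logb ξ C` and `t = logb ξ b`, so that `b * C ^ k = ξ ^ (t + k * α)`. Since
`x ↦ g (exp (-x))` is antitone, the `k`-th numerator term is at most the `⌊t + k * α⌋₊`-th
denominator term, and at most about `α⁻¹ * J` indices `k` are sent below `J`. Abel summation
against the antitone denominator terms turns this into
`numerator ≤ α⁻¹ * denominator + O(1)`, and the denominator diverges, so the limsup is at most
`α⁻¹`. Finally `α⁻¹ < 1 + δ` as soon as `C > ξ ^ θ` with `θ = (1 + δ)⁻¹`, i.e. for
`ε < 1 - ξ ^ (θ - 1)`; this also gives `C > 1`.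
-/

open Filter Finset Real

theorem sum_range_succ_eq_add_sum_Icc (a : ℕ → ℝ) (n : ℕ) :
    ∑ j ∈ range (n + 1), a j = a 0 + ∑ k ∈ Icc 1 n, a k := by
  rw [sum_range_succ', add_comm, ← Ico_add_one_right_eq_Icc, sum_Ico_eq_sum_range]
  simp only [add_tsub_cancel_right, add_comm 1]

theorem sum_range_add_le {a : ℕ → ℝ} (ha : Antitone a) (m T : ℕ) :
    ∑ j ∈ range (m + T), a j ≤ ∑ j ∈ range m, a j + T * a 0 := by
  rw [sum_range_add]
  gcongr
  simpa using sum_le_card_nsmul (range T) _ (a 0) fun j _ => ha (Nat.zero_le _)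

theorem sum_mul_le_of_sum_le {a m : ℕ → ℝ} {β c : ℝ} (ha : Antitone a) (ha0 : ∀ j, 0 ≤ a j)
    (hm : ∀ N : ℕ, ∑ j ∈ range N, m j ≤ β * N + c) (N : ℕ) :
    ∑ j ∈ range N, m j * a j ≤ β * ∑ j ∈ range N, a j + c * a 0 := by
  have key : ∀ N : ℕ, ∑ j ∈ range N, m j * a j + (β * N + c - ∑ j ∈ range N, m j) * a N
      ≤ β * ∑ j ∈ range N, a j + c * a 0 := by
    intro N
    induction N with
    | zero => simp
    | succ N ih =>
      have hslack := mul_le_mul_of_nonneg_left (ha N.le_succ) (sub_nonneg.2 (hm (N + 1)))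
      simp only [sum_range_succ, Nat.cast_succ] at hslack ⊢
      linarith
  linarith [key N, mul_nonneg (sub_nonneg.2 (hm N)) (ha0 N)]

theorem sum_comp_le_of_card_filter_le {ι : Type*} {a : ℕ → ℝ} (ha : Antitone a)
    (ha0 : ∀ j, 0 ≤ a j) {s : Finset ι} {f : ι → ℕ} {N : ℕ} {β c : ℝ}
    (hfN : ∀ k ∈ s, f k < N) (hcard : ∀ J : ℕ, (#{k ∈ s | f k < J} : ℝ) ≤ β * J + c) :
    ∑ k ∈ s, a (f k) ≤ β * ∑ j ∈ range N, a j + c * a 0 := by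
  have hfiber : ∑ k ∈ s, a (f k) = ∑ j ∈ range N, (#{k ∈ s | f k = j} : ℝ) * a j := by
    rw [← sum_fiberwise_of_maps_to fun k hk => mem_range.2 (hfN k hk)]
    refine sum_congr rfl fun j _ => ?_
    rw [sum_congr rfl fun k hk => congrArg a (mem_filter.1 hk).2, sum_const, nsmul_eq_mul]
  rw [hfiber]
  refine sum_mul_le_of_sum_le ha ha0 (fun J => ?_) N
  rw [← Nat.cast_sum, sum_card_fiberwise_eq_card_filter]
  simpa only [mem_range] using hcard J

theorem card_filter_lt_le {s : Finset ℕ} {f : ℕ → ℕ} {β c : ℝ} (hβ : 0 ≤ β) (hc : 0 ≤ c)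
    (hf : ∀ k ∈ s, (k : ℝ) < β * (f k + 1) + c) (J : ℕ) :
    (#{k ∈ s | f k < J} : ℝ) ≤ β * J + (c + 1) := by
  have hsub : {k ∈ s | f k < J} ⊆ range ⌈β * J + c⌉₊ := by
    intro k hk
    obtain ⟨hks, hkJ⟩ := mem_filter.1 hk
    have hfJ : (f k : ℝ) + 1 ≤ J := by exact_mod_cast hkJ
    have hk : (k : ℝ) < ⌈β * J + c⌉₊ :=
      ((hf k hks).trans_le (by gcongr)).trans_le (Nat.le_ceil _)
    exact mem_range.2 (by exact_mod_cast hk)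
  calc (#{k ∈ s | f k < J} : ℝ) ≤ ⌈β * J + c⌉₊ := by
        exact_mod_cast (card_le_card hsub).trans (card_range _).le
    _ ≤ β * J + (c + 1) := by
        linarith [Nat.ceil_lt_add_one (show 0 ≤ β * J + c by positivity)]

theorem sum_Icc_le_of_le_comp {a u : ℕ → ℝ} (ha : Antitone a) (ha0 : ∀ j, 0 ≤ a j)
    (hu0 : ∀ k, 0 ≤ u k) {f : ℕ → ℕ} {K T : ℕ} {β c : ℝ} (hβ : 0 ≤ β) (hc : 0 ≤ c)
    (hu : ∀ k ≥ K, u k ≤ a (f k)) (hfT : ∀ k ≥ K, f k ≤ k + T)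
    (hf : ∀ k ≥ K, (k : ℝ) < β * (f k + 1) + c) (n : ℕ) :
    ∑ k ∈ Icc 1 n, u k ≤
      β * ∑ k ∈ Icc 1 n, a k + (∑ k ∈ range K, u k + β * (T + 1) * a 0 + (c + 1) * a 0) := by
  have htail := mul_le_mul_of_nonneg_left (sum_range_add_le ha (n + 1) T) hβ
  rw [sum_range_succ_eq_add_sum_Icc] at htail
  calc ∑ k ∈ Icc 1 n, u k
      = ∑ k ∈ Icc 1 n with ¬ K ≤ k, u k + ∑ k ∈ Icc 1 n with K ≤ k, u k :=
        (sum_filter_not_add_sum_filter _ _ _).symm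
    _ ≤ ∑ k ∈ range K, u k + ∑ k ∈ Icc 1 n with K ≤ k, a (f k) :=
        add_le_add
          (sum_le_sum_of_subset_of_nonneg
            (fun k hk => mem_range.2 (not_le.1 (mem_filter.1 hk).2)) fun k _ _ => hu0 k)
          (sum_le_sum fun k hk => hu k (mem_filter.1 hk).2)
    _ ≤ ∑ k ∈ range K, u k + (β * ∑ j ∈ range (n + 1 + T), a j + (c + 1) * a 0) := by
        gcongr
        refine sum_comp_le_of_card_filter_le ha ha0 (fun k hk => ?_)
          (card_filter_lt_le hβ hc fun k hk => hf k (mem_filter.1 hk).2)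
        obtain ⟨hk, hKk⟩ := mem_filter.1 hk
        linarith [hfT k hKk, (mem_Icc.1 hk).2]
    _ ≤ _ := by linarith

theorem tendsto_sum_Icc_atTop_of_not_summable {a : ℕ → ℝ} (ha0 : ∀ k, 0 ≤ a k)
    (h : ¬ Summable fun k => a (k + 1)) :
    Tendsto (fun n => ∑ k ∈ Icc 1 n, a k) atTop atTop := by
  rw [not_summable_iff_tendsto_nat_atTop_of_nonneg fun k => ha0 (k + 1)] at h
  refine h.congr fun n => ?_
  linarith [sum_range_succ' a n, sum_range_succ_eq_add_sum_Icc a n]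

theorem limsup_ofReal_div_le {u v : ℕ → ℝ} {β γ M : ℝ} (hv : Tendsto v atTop atTop)
    (hβγ : β < γ) (huv : ∀ n, u n ≤ β * v n + M) :
    limsup (fun n => ENNReal.ofReal (u n / v n)) atTop ≤ ENNReal.ofReal γ := by
  refine limsup_le_of_le (by isBoundedDefault) ?_
  filter_upwards [hv.eventually_gt_atTop 0, hv.eventually_ge_atTop (M / (γ - β))]
    with n hpos hlarge
  refine ENNReal.ofReal_le_ofReal ((div_le_iff₀ hpos).2 ?_)
  have := (div_le_iff₀ (sub_pos.2 hβγ)).1 hlarge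
  linarith [huv n]

theorem Real.pow_floor_logb_le {ξ y : ℝ} (hξ : 1 < ξ) (hy : 1 ≤ y) : ξ ^ ⌊logb ξ y⌋₊ ≤ y := by
  rw [← rpow_natCast]
  calc ξ ^ (⌊logb ξ y⌋₊ : ℝ) ≤ ξ ^ logb ξ y :=
        rpow_le_rpow_of_exponent_le hξ.le (Nat.floor_le (logb_nonneg hξ hy))
    _ = y := rpow_logb (by linarith) hξ.ne' (by linarith)

theorem exists_sum_le_inv_logb_mul_sum_add {h : ℝ → ℝ} (hh0 : ∀ x ∈ Set.Ici (0 : ℝ), 0 ≤ h x)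
    (hh : AntitoneOn h (Set.Ici 0)) {ξ b C : ℝ} (hξ : 1 < ξ) (hb : 0 < b) (hC : 1 < C)
    (hCξ : C ≤ ξ) :
    ∃ M, ∀ n, ∑ k ∈ Icc 1 n, h (b * C ^ k) ≤ (logb ξ C)⁻¹ * ∑ k ∈ Icc 1 n, h (ξ ^ k) + M := by
  have hξ0 : 0 < ξ := by linarith
  have ha : Antitone fun j : ℕ => h (ξ ^ j) := fun i j hij =>
    hh (Set.mem_Ici.2 (by positivity)) (Set.mem_Ici.2 (by positivity))
      (pow_le_pow_right₀ hξ.le hij)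
  set α := logb ξ C
  have hα0 : 0 < α := logb_pos hξ hC
  have hα1 : α ≤ 1 := by
    simpa [logb_self_eq_one hξ] using logb_le_logb_of_le hξ (by linarith) hCξ
  set t := logb ξ b
  have hlogb : ∀ k : ℕ, logb ξ (b * C ^ k) = t + k * α := fun k => by
    rw [logb_mul hb.ne' (pow_ne_zero _ (by linarith)), logb_pow]
  obtain ⟨K, hK⟩ : ∃ K, ∀ k ≥ K, 1 ≤ b * C ^ k := eventually_atTop.1 <|
    ((tendsto_pow_atTop_atTop_of_one_lt hC).const_mul_atTop hb).eventually_ge_atTop 1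
  set f : ℕ → ℕ := fun k => ⌊logb ξ (b * C ^ k)⌋₊
  have hu : ∀ k ≥ K, h (b * C ^ k) ≤ h (ξ ^ f k) := fun k hk =>
    hh (Set.mem_Ici.2 (by positivity)) (Set.mem_Ici.2 (by linarith [hK k hk]))
      (pow_floor_logb_le hξ (hK k hk))
  have hfT : ∀ k ≥ K, f k ≤ k + ⌈t⌉₊ := fun k hk => by
    have hfk : (f k : ℝ) ≤ logb ξ (b * C ^ k) := Nat.floor_le (logb_nonneg hξ (hK k hk))
    rw [hlogb] at hfk
    have : (f k : ℝ) ≤ k + ⌈t⌉₊ := by nlinarith [Nat.le_ceil t, (Nat.cast_nonneg k : (0 : ℝ) ≤ k)]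
    exact_mod_cast this
  have hf : ∀ k ≥ K, (k : ℝ) < α⁻¹ * (f k + 1) + α⁻¹ * |t| := fun k _ => by
    have hfk : logb ξ (b * C ^ k) < f k + 1 := Nat.lt_floor_add_one _
    rw [hlogb] at hfk
    rw [← mul_add, lt_inv_mul_iff₀ hα0]
    linarith [neg_abs_le t]
  exact ⟨_, sum_Icc_le_of_le_comp ha (fun j => hh0 _ (Set.mem_Ici.2 (by positivity)))
    (fun k => hh0 _ (Set.mem_Ici.2 (by positivity))) (inv_nonneg.2 hα0.le) (by positivity)
    hu hfT hf⟩

theorem Real.exp_neg_mem_Icc {x : ℝ} (hx : 0 ≤ x) : exp (-x) ∈ Set.Icc (0 : ℝ) 1 :=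
  ⟨(exp_pos _).le, exp_le_one_iff.2 (neg_nonpos.2 hx)⟩

theorem MonotoneOn.antitoneOn_comp_exp_neg {g : ℝ → ℝ} (hg : MonotoneOn g (Set.Icc 0 1)) :
    AntitoneOn (fun x => g (exp (-x))) (Set.Ici 0) := fun _ hx _ hy hxy =>
  hg (exp_neg_mem_Icc hy) (exp_neg_mem_Icc hx) (exp_le_exp.2 (neg_le_neg hxy))

/-- **(5.28)–(5.33).** For `g` nonnegative and nondecreasing on `[0,1]`, `ξ > 1`,
and `∑_k g(exp(-ξ^k)) = ∞`: for every `b > 0` and `δ > 0` there is `ε₀ ∈ (0,1)` such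
that for every `ε ∈ (0,ε₀)`, with `C := (1-ε)ξ` one has `C > 1`, the denominator is
eventually positive, and
`limsup_n (∑_{k=1}^n g(exp(-b C^k))) / (∑_{k=1}^n g(exp(-ξ^k))) ≤ 1 + δ`. -/
theorem stmt15 (g : ℝ → ℝ)
    (hg0 : ∀ x ∈ Set.Icc (0 : ℝ) 1, 0 ≤ g x)
    (hgmono : ∀ x ∈ Set.Icc (0 : ℝ) 1, ∀ y ∈ Set.Icc (0 : ℝ) 1, x ≤ y → g x ≤ g y)
    (ξ : ℝ) (hξ : 1 < ξ)
    (hdiv : ¬ Summable (fun k : ℕ => g (Real.exp (-(ξ ^ (k + 1)))))) :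
    ∀ b : ℝ, 0 < b → ∀ δ : ℝ, 0 < δ →
      ∃ ε₀ ∈ Set.Ioo (0 : ℝ) 1, ∀ ε ∈ Set.Ioo (0 : ℝ) ε₀,
        1 < (1 - ε) * ξ ∧
        (∀ᶠ n : ℕ in atTop,
          0 < ∑ k ∈ Finset.Icc 1 n, g (Real.exp (-(ξ ^ k)))) ∧
        Filter.limsup (fun n : ℕ =>
            ENNReal.ofReal
              ((∑ k ∈ Finset.Icc 1 n, g (Real.exp (-(b * ((1 - ε) * ξ) ^ k)))) /
                (∑ k ∈ Finset.Icc 1 n, g (Real.exp (-(ξ ^ k)))))) atTop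
          ≤ ENNReal.ofReal (1 + δ) := by
  intro b hb δ hδ
  have hh0 : ∀ x ∈ Set.Ici (0 : ℝ), 0 ≤ g (exp (-x)) := fun _ hx => hg0 _ (exp_neg_mem_Icc hx)
  have hh := MonotoneOn.antitoneOn_comp_exp_neg fun _ hx _ hy => hgmono _ hx _ hy
  have hD := tendsto_sum_Icc_atTop_of_not_summable (fun k =>
    hh0 _ (Set.mem_Ici.2 (pow_nonneg (by linarith : (0 : ℝ) ≤ ξ) k))) hdiv
  set θ := (1 + δ)⁻¹
  have hθ : 0 < θ ∧ θ < 1 := ⟨by positivity, inv_lt_one_of_one_lt₀ (by linarith)⟩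
  refine ⟨1 - ξ ^ (θ - 1), ⟨sub_pos.2 (rpow_lt_one_of_one_lt_of_neg hξ (by linarith)),
    sub_lt_self _ (by positivity)⟩, fun ε ⟨hε0, hε⟩ => ?_⟩
  have hCθ : ξ ^ θ < (1 - ε) * ξ := by
    rw [← div_lt_iff₀ (by linarith), ← rpow_sub_one (by linarith)]
    linarith
  have hC : 1 < (1 - ε) * ξ := (one_lt_rpow hξ hθ.1).trans hCθ
  have hβ : (logb ξ ((1 - ε) * ξ))⁻¹ < 1 + δ := by
    rw [← inv_inv (1 + δ)]
    exact inv_strictAnti₀ hθ.1 ((lt_logb_iff_rpow_lt hξ (by linarith)).2 hCθ)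
  obtain ⟨M, hM⟩ := exists_sum_le_inv_logb_mul_sum_add hh0 hh hξ hb hC
    (mul_le_of_le_one_left (by linarith) (by linarith))
  exact ⟨hC, hD.eventually_gt_atTop 0, limsup_ofReal_div_le hD hβ hM⟩
end

section
/- Let g : ℝ → ℝ be nonnegative and nondecreasing on [0,1], let ξ > 1, and suppose ∑_{k=1}^∞ g(exp(−ξ^k)) = ∞. Then for every b > 0, every integer k₁ ≥ 1, and every δ > 0 there exists ε₀ ∈ (0,1) such that for every ε ∈ (0,ε₀), setting C := (1+ε)·ξ, liminf_{n→∞} ( ∑_{k=k₁}^n g(exp(−b·C^k)) ) / ( ∑_{k=1}^n g(exp(−ξ^k)) ) ≥ 1 − δ. -/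
open Filter Finset

/-!
Put `a j := g (exp (-ξ ^ j))`, a nonnegative antitone sequence with divergent sum. If
`1 + ε ≤ ξ ^ δ` and `b ≤ ξ ^ m`, then `b ((1 + ε) ξ) ^ k ≤ ξ ^ φ k` with
`φ k := ⌈(1 + δ) k⌉₊ + m`, so the `k`-th numerator term dominates `a (φ k)`. Since `φ` grows
with average slope at most `1 + δ`, cutting `∑_{j < φ (n + 1)} a j` into the blocks
`[φ k, φ (k + 1))` and summing by parts gives `∑_{j ≤ n} a j ≤ (1 + δ) ∑_{k ≤ n} a (φ k) + O(1)`.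
As the denominator diverges, the liminf of the ratio is at least `1 / (1 + δ) ≥ 1 - δ`.
-/

theorem Antitone.sum_range_le_add_sum_gap_mul {a : ℕ → ℝ} (ha : Antitone a) {φ : ℕ → ℕ}
    (hφ : Monotone φ) (n : ℕ) :
    ∑ j ∈ range (φ n), a j ≤
      ∑ j ∈ range (φ 0), a j + ∑ k ∈ range n, ((φ (k + 1) : ℝ) - φ k) * a (φ k) := by
  induction n with
  | zero => simp
  | succ n ih =>
    have hstep : φ n ≤ φ (n + 1) := hφ n.le_succ
    have hblock : ∑ j ∈ Ico (φ n) (φ (n + 1)), a j ≤ ((φ (n + 1) : ℝ) - φ n) * a (φ n) := by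
      have h := sum_le_card_nsmul (Ico (φ n) (φ (n + 1))) a (a (φ n))
        fun j hj => ha (mem_Ico.1 hj).1
      rwa [Nat.card_Ico, nsmul_eq_mul, Nat.cast_sub hstep] at h
    rw [← sum_range_add_sum_Ico _ hstep, sum_range_succ]
    linarith

theorem Antitone.sum_mul_le_of_sum_le {x d : ℕ → ℝ} (hx : Antitone x) (hx0 : ∀ k, 0 ≤ x k)
    {c D : ℝ} (hd : ∀ m, ∑ k ∈ range m, d k ≤ c * m + D) (n : ℕ) :
    ∑ k ∈ range n, d k * x k ≤ c * ∑ k ∈ range n, x k + D * x 0 := by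
  -- `c m + D - ∑_{k < m} d k ≥ 0` is the unspent budget; it only ever multiplies a decrease of `x`.
  have budget : ∀ n, ∑ k ∈ range n, d k * x k + (c * n + D - ∑ k ∈ range n, d k) * x n ≤
      c * ∑ k ∈ range n, x k + D * x 0 := by
    intro n
    induction n with
    | zero => simp
    | succ n ih =>
      have hslack := mul_le_mul_of_nonneg_left (hx n.le_succ)
        (sub_nonneg.2 (hd (n + 1)))
      simp only [sum_range_succ, Nat.cast_succ] at hslack ⊢
      linarith
  linarith [budget n, mul_nonneg (sub_nonneg.2 (hd n)) (hx0 n)]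

theorem sum_Icc_le_mul_sum_Icc_add_of_le_comp_ceil {a f : ℕ → ℝ} (ha : Antitone a)
    (ha0 : ∀ j, 0 ≤ a j) {c : ℝ} (hc : 1 ≤ c) {m : ℕ}
    (hfa : ∀ k : ℕ, a (⌈c * k⌉₊ + m) ≤ f k) (k₁ : ℕ) :
    ∃ K, ∀ n, k₁ ≤ n → ∑ j ∈ Icc 1 n, a j ≤ c * ∑ k ∈ Icc k₁ n, f k + K := by
  set φ : ℕ → ℕ := fun k => ⌈c * k⌉₊ + m
  have hφ : Monotone φ := fun k l hkl => by
    have : c * k ≤ c * l := by gcongr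
    exact Nat.add_le_add_right (Nat.ceil_mono this) m
  have hgaps : ∀ M, ∑ k ∈ range M, ((φ (k + 1) : ℝ) - φ k) ≤ c * M + 1 := fun M => by
    rw [sum_range_sub fun k => (φ k : ℝ)]
    have := Nat.ceil_lt_add_one (by positivity : (0 : ℝ) ≤ c * M)
    simp only [φ, Nat.cast_add, Nat.cast_zero, mul_zero, Nat.ceil_zero]
    linarith
  refine ⟨∑ j ∈ range (φ 0), a j + a (φ 0) + c * ∑ k ∈ range k₁, f k, fun n hn => ?_⟩
  have hcover : ∑ j ∈ Icc 1 n, a j ≤ ∑ j ∈ range (φ (n + 1)), a j := by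
    refine sum_le_sum_of_subset_of_nonneg (fun j hj => ?_) fun j _ _ => ha0 j
    have : n < ⌈c * (n + 1 : ℕ)⌉₊ := Nat.lt_ceil.2 (by push_cast; nlinarith)
    simp only [mem_Icc, mem_range, φ] at hj ⊢
    omega
  have hsplit : ∑ k ∈ range (n + 1), f k = ∑ k ∈ range k₁, f k + ∑ k ∈ Icc k₁ n, f k := by
    rw [← Ico_add_one_right_eq_Icc, sum_range_add_sum_Ico _ (by omega)]
  have habel := (ha.comp_monotone hφ).sum_mul_le_of_sum_le (fun k => ha0 (φ k)) hgaps (n + 1)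
  have hblocks := ha.sum_range_le_add_sum_gap_mul hφ (n + 1)
  have hcomp : ∑ k ∈ range (n + 1), a (φ k) ≤ ∑ k ∈ range (n + 1), f k :=
    sum_le_sum fun k _ => hfa k
  simp only [Function.comp_apply, one_mul] at habel
  rw [hsplit] at hcomp
  linarith [mul_le_mul_of_nonneg_left hcomp (by linarith : 0 ≤ c)]

theorem le_liminf_ofReal_div_of_le_mul_add {u v : ℕ → ℝ} (hv : Tendsto v atTop atTop)
    {c K : ℝ} (hc : 0 < c) (huv : ∀ᶠ n in atTop, v n ≤ c * u n + K) :
    ENNReal.ofReal c⁻¹ ≤ liminf (fun n => ENNReal.ofReal (u n / v n)) atTop := by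
  have hlim : Tendsto (fun n => c⁻¹ - K / c * (v n)⁻¹) atTop (nhds c⁻¹) := by
    simpa using tendsto_const_nhds.sub (tendsto_const_nhds.mul hv.inv_tendsto_atTop)
  rw [← (ENNReal.tendsto_ofReal hlim).liminf_eq]
  refine liminf_le_liminf ?_
  filter_upwards [huv, hv.eventually_gt_atTop 0] with n hn hvn
  refine ENNReal.ofReal_le_ofReal ?_
  rw [le_div_iff₀ hvn]
  field_simp
  linarith

theorem exp_neg_mem_Icc {u : ℝ} (hu : 0 ≤ u) : Real.exp (-u) ∈ Set.Icc (0 : ℝ) 1 :=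
  ⟨(Real.exp_pos _).le, Real.exp_le_one_iff.2 (neg_nonpos.2 hu)⟩

theorem comp_exp_neg_le_comp_exp_neg {g : ℝ → ℝ}
    (hgmono : ∀ x ∈ Set.Icc (0 : ℝ) 1, ∀ y ∈ Set.Icc (0 : ℝ) 1, x ≤ y → g x ≤ g y)
    {u v : ℝ} (hu : 0 ≤ u) (huv : u ≤ v) : g (Real.exp (-v)) ≤ g (Real.exp (-u)) :=
  hgmono _ (exp_neg_mem_Icc (hu.trans huv)) _ (exp_neg_mem_Icc hu)
    (Real.exp_le_exp.2 (neg_le_neg huv))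

theorem mul_pow_le_pow_ceil_add {ξ b ε δ : ℝ} (hξ : 1 < ξ) (hb : 0 ≤ b) (hε : 0 ≤ ε)
    (hεδ : 1 + ε ≤ ξ ^ δ) {m : ℕ} (hm : b ≤ ξ ^ m) (k : ℕ) :
    b * ((1 + ε) * ξ) ^ k ≤ ξ ^ (⌈(1 + δ) * k⌉₊ + m) := by
  have hξ0 : 0 < ξ := one_pos.trans hξ
  have hpow : ((1 + ε) * ξ) ^ k ≤ ξ ^ ⌈(1 + δ) * k⌉₊ :=
    calc ((1 + ε) * ξ) ^ k ≤ (ξ ^ δ * ξ) ^ k := by gcongr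
      _ = ξ ^ ((1 + δ) * k) := by
        rw [← Real.rpow_natCast, ← Real.rpow_add_one hξ0.ne', ← Real.rpow_mul hξ0.le, add_comm]
      _ ≤ ξ ^ (⌈(1 + δ) * k⌉₊ : ℝ) := Real.rpow_le_rpow_of_exponent_le hξ.le (Nat.le_ceil _)
      _ = ξ ^ ⌈(1 + δ) * k⌉₊ := Real.rpow_natCast _ _
  rw [pow_add, mul_comm b]
  exact mul_le_mul hpow hm hb (by positivity)

theorem tendsto_sum_Icc_one_atTop_of_not_summable {a : ℕ → ℝ} (ha0 : ∀ j, 0 ≤ a j)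
    (ha : ¬ Summable fun k => a (k + 1)) :
    Tendsto (fun n => ∑ j ∈ Icc 1 n, a j) atTop atTop := by
  have hIcc : ∀ n, ∑ j ∈ Icc 1 n, a j = ∑ k ∈ range n, a (k + 1) := fun n => by
    rw [← Ico_add_one_right_eq_Icc, sum_Ico_eq_sum_range]
    simp [add_comm]
  simpa only [hIcc] using (not_summable_iff_tendsto_nat_atTop_of_nonneg fun k => ha0 (k + 1)).1 ha

/-- **(6.27)–(6.31).** For `g` nonnegative and nondecreasing on `[0,1]`, `ξ > 1`,
and `∑_k g(exp(-ξ^k)) = ∞`: for every `b > 0`, `k₁ ≥ 1` and `δ > 0` there is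
`ε₀ ∈ (0,1)` such that for every `ε ∈ (0,ε₀)`, with `C := (1+ε)ξ`,
`liminf_n (∑_{k=k₁}^n g(exp(-b C^k))) / (∑_{k=1}^n g(exp(-ξ^k))) ≥ 1 - δ`. -/
theorem stmt16 (g : ℝ → ℝ)
    (hg0 : ∀ x ∈ Set.Icc (0 : ℝ) 1, 0 ≤ g x)
    (hgmono : ∀ x ∈ Set.Icc (0 : ℝ) 1, ∀ y ∈ Set.Icc (0 : ℝ) 1, x ≤ y → g x ≤ g y)
    (ξ : ℝ) (hξ : 1 < ξ)
    (hdiv : ¬ Summable (fun k : ℕ => g (Real.exp (-(ξ ^ (k + 1)))))) :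
    ∀ b : ℝ, 0 < b → ∀ k₁ : ℕ, 1 ≤ k₁ → ∀ δ : ℝ, 0 < δ →
      ∃ ε₀ ∈ Set.Ioo (0 : ℝ) 1, ∀ ε ∈ Set.Ioo (0 : ℝ) ε₀,
        ENNReal.ofReal (1 - δ) ≤
          Filter.liminf (fun n : ℕ =>
            ENNReal.ofReal
              ((∑ k ∈ Finset.Icc k₁ n, g (Real.exp (-(b * ((1 + ε) * ξ) ^ k)))) /
                (∑ k ∈ Finset.Icc 1 n, g (Real.exp (-(ξ ^ k)))))) atTop := by
  intro b hb k₁ _ δ hδ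
  obtain ⟨m, hm⟩ := pow_unbounded_of_one_lt b hξ
  have hξδ : 1 < ξ ^ δ := Real.one_lt_rpow hξ hδ
  refine ⟨min (1 / 2) (ξ ^ δ - 1), ⟨lt_min (by norm_num) (by linarith), by norm_num⟩,
    fun ε ⟨hε0, hε⟩ => ?_⟩
  set a : ℕ → ℝ := fun j => g (Real.exp (-(ξ ^ j)))
  have ha0 : ∀ j, 0 ≤ a j := fun j => hg0 _ (exp_neg_mem_Icc (by positivity))
  have ha : Antitone a := fun i j hij =>
    comp_exp_neg_le_comp_exp_neg hgmono (by positivity) (pow_le_pow_right₀ hξ.le hij)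
  have hfa : ∀ k : ℕ, a (⌈(1 + δ) * k⌉₊ + m) ≤ g (Real.exp (-(b * ((1 + ε) * ξ) ^ k))) :=
    fun k => comp_exp_neg_le_comp_exp_neg hgmono (by positivity) <|
      mul_pow_le_pow_ceil_add hξ hb.le hε0.le (by linarith [min_le_right (1 / 2) (ξ ^ δ - 1)])
        hm.le k
  obtain ⟨K, hK⟩ := sum_Icc_le_mul_sum_Icc_add_of_le_comp_ceil ha ha0 (by linarith) hfa k₁
  calc ENNReal.ofReal (1 - δ) ≤ ENNReal.ofReal (1 + δ)⁻¹ :=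
        ENNReal.ofReal_le_ofReal <| by rw [← one_div, le_div_iff₀ (by positivity)]; nlinarith
    _ ≤ _ := le_liminf_ofReal_div_of_le_mul_add
        (tendsto_sum_Icc_one_atTop_of_not_summable ha0 hdiv) (by positivity)
        ((eventually_ge_atTop k₁).mono hK)
end

section
/- Let τ > 1 and let ℓ : ℝ → ℝ be measurable, positive on [t₀,∞) for some t₀ ≥ 1, and slowly varying at infinity. Let (W_i)_{i≥1} be independent, identically distributed random variables with P(W_1 > t) = ℓ(t)·t^{−(τ−1)} for all t ≥ t₀. Then for every δ ∈ (0,1) there exists N₀ such that for every integer N ≥ N₀: P( max_{1≤i≤N} W_i ≤ N^{(1−δ)/(τ−1)} ) ≤ exp(−N^{δ/2}). -/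
open MeasureTheory ProbabilityTheory

/-- A function `ℓ : ℝ → ℝ` is slowly varying at infinity:
for every `c > 0`, `ℓ(ct)/ℓ(t) → 1` as `t → ∞`. -/
def SlowlyVarying (l : ℝ → ℝ) : Prop :=
  ∀ c : ℝ, 0 < c → Filter.Tendsto (fun t => l (c * t) / l t) Filter.atTop (nhds 1)

/-! With `a = N ^ α`, `α = (1 - δ) / (τ - 1)`, independence gives
`P(max W_i ≤ a) = (1 - p) ^ N ≤ exp (-N p)` where `p = P(W > a)`. Since `ℓ(2t)/ℓ(t) → 1`, the tail
loses at most a factor `2 ^ (-(τ - 1 + ε))` per doubling of `t`, and being monotone it is therefore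
at least `c t ^ (-(τ - 1 + ε))` (a Potter-type bound). For `ε = δ / (4α)` this gives
`N p ≥ c N ^ (3δ/4)`, which eventually exceeds `N ^ (δ/2)`. -/

open Filter Real Set

/-- The constant `c = T ^ s * F (2T)` handles `[T, 2T]` by monotonicity; each doubling of `t`
costs a factor `2 ^ (-s)` on both sides. -/
theorem exists_mul_rpow_neg_le_of_doubling {F : ℝ → ℝ} {T s : ℝ} (hT : 0 < T) (hs : 0 ≤ s)
    (hF : AntitoneOn F (Ici T)) (hFT : 0 < F T)
    (hdouble : ∀ t, T ≤ t → 2 ^ (-s) * F t ≤ F (2 * t)) :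
    ∃ c > 0, ∀ t, T ≤ t → c * t ^ (-s) ≤ F t := by
  have h2T : T ≤ 2 * T := by linarith
  set c := T ^ s * F (2 * T) with hc_def
  have hF2T : 0 < F (2 * T) :=
    (mul_pos (rpow_pos_of_pos two_pos _) hFT).trans_le (hdouble T le_rfl)
  have hc : 0 < c := mul_pos (rpow_pos_of_pos hT s) hF2T
  have hsmall : ∀ t, T ≤ t → t ≤ 2 * T → c * t ^ (-s) ≤ F t := fun t hTt ht2 =>
    calc c * t ^ (-s) ≤ c * T ^ (-s) :=
          mul_le_mul_of_nonneg_left (rpow_le_rpow_of_nonpos hT hTt (neg_nonpos.2 hs)) hc.le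
      _ = F (2 * T) := by
          rw [hc_def, mul_right_comm, ← rpow_add hT, add_neg_cancel, rpow_zero, one_mul]
      _ ≤ F t := hF hTt h2T ht2
  have hgrid : ∀ n : ℕ, ∀ t, T ≤ t → t ≤ 2 ^ n * T → c * t ^ (-s) ≤ F t := by
    intro n
    induction n with
    | zero => exact fun t hTt htn => hsmall t hTt (by linarith)
    | succ n ih =>
      intro t hTt htn
      rcases le_or_gt t (2 * T) with ht2 | ht2
      · exact hsmall t hTt ht2
      · have ht : 0 < t := hT.trans_le hTt
        calc c * t ^ (-s) = 2 ^ (-s) * (c * (t / 2) ^ (-s)) := by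
              rw [mul_left_comm, ← mul_rpow zero_le_two (by positivity),
                mul_div_cancel₀ _ two_ne_zero]
          _ ≤ 2 ^ (-s) * F (t / 2) := by
              gcongr
              exact ih _ (by linarith) (by rw [pow_succ] at htn; linarith)
          _ ≤ F (2 * (t / 2)) := hdouble (t / 2) (by linarith)
          _ = F t := by ring_nf
  refine ⟨c, hc, fun t hTt => ?_⟩
  obtain ⟨n, hn⟩ := pow_unbounded_of_one_lt (t / T) one_lt_two
  exact hgrid n t hTt ((div_le_iff₀ hT).1 hn.le)

theorem SlowlyVarying.exists_mul_rpow_neg_le {l F : ℝ → ℝ} {ρ ε : ℝ} (hl : SlowlyVarying l)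
    (hlpos : ∀ᶠ t in atTop, 0 < l t) (hF : Antitone F)
    (hFl : ∀ᶠ t in atTop, F t = l t * t ^ (-ρ)) (hρ : 0 ≤ ρ) (hε : 0 < ε) :
    ∃ c > 0, ∀ᶠ t in atTop, c * t ^ (-(ρ + ε)) ≤ F t := by
  have hratio : ∀ᶠ t in atTop, 2 ^ (-ε) ≤ l (2 * t) / l t :=
    (hl 2 two_pos).eventually
      (eventually_ge_nhds (rpow_lt_one_of_one_lt_of_neg one_lt_two (neg_neg_of_pos hε)))
  have hFl2 : ∀ᶠ t in atTop, F (2 * t) = l (2 * t) * (2 * t) ^ (-ρ) :=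
    (tendsto_id.const_mul_atTop two_pos).eventually hFl
  obtain ⟨T, hT⟩ := (hratio.and <| hlpos.and <| hFl.and <| hFl2.and <|
    eventually_ge_atTop 1).exists_forall_of_atTop
  have hT1 : 1 ≤ T := (hT T le_rfl).2.2.2.2
  have hdouble : ∀ t, T ≤ t → 2 ^ (-(ρ + ε)) * F t ≤ F (2 * t) := by
    intro t hTt
    obtain ⟨hr, hlt, hFt, hF2t, ht1⟩ := hT t hTt
    have hl2 : 2 ^ (-ε) * l t ≤ l (2 * t) := (le_div_iff₀ hlt).1 hr
    rw [hFt, hF2t, mul_rpow zero_le_two (by linarith), neg_add, rpow_add two_pos]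
    calc 2 ^ (-ρ) * 2 ^ (-ε) * (l t * t ^ (-ρ)) = 2 ^ (-ε) * l t * (2 ^ (-ρ) * t ^ (-ρ)) := by ring
      _ ≤ l (2 * t) * (2 ^ (-ρ) * t ^ (-ρ)) := by gcongr
  have hFT : 0 < F T := by
    rw [(hT T le_rfl).2.2.1]
    exact mul_pos (hT T le_rfl).2.1 (rpow_pos_of_pos (by linarith) _)
  obtain ⟨c, hc, hcF⟩ := exists_mul_rpow_neg_le_of_doubling (by linarith) (by linarith)
    (hF.antitoneOn _) hFT hdouble
  exact ⟨c, hc, eventually_atTop.2 ⟨T, hcF⟩⟩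

theorem measure_compl_pow_le_exp {α : Type*} [MeasurableSpace α] {ν : Measure α}
    [IsProbabilityMeasure ν] {s : Set α} (hs : MeasurableSet s) (n : ℕ) :
    ν sᶜ ^ n ≤ ENNReal.ofReal (exp (-(n * ν.real s))) := by
  rw [← ofReal_measureReal, ← ENNReal.ofReal_pow measureReal_nonneg, probReal_compl_eq_one_sub hs]
  refine ENNReal.ofReal_le_ofReal ?_
  calc (1 - ν.real s) ^ n ≤ exp (-ν.real s) ^ n :=
        pow_le_pow_left₀ (sub_nonneg.2 measureReal_le_one) (one_sub_le_exp_neg _) n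
    _ = exp (-(n * ν.real s)) := by rw [← exp_nat_mul, mul_neg]

theorem ProbabilityTheory.iIndepFun.measure_sup'_le {Ω ι : Type*} [MeasurableSpace Ω]
    {μ : Measure Ω} {W : ι → Ω → ℝ} (hindep : iIndepFun W μ) (hmeas : ∀ i, Measurable (W i))
    {ν : Measure ℝ} (hid : ∀ i, μ.map (W i) = ν) {s : Finset ι} (hs : s.Nonempty) (a : ℝ) :
    μ {ω | s.sup' hs (fun i => W i ω) ≤ a} = ν (Iic a) ^ s.card := by
  have hset : {ω | s.sup' hs (fun i => W i ω) ≤ a} = ⋂ i ∈ s, W i ⁻¹' Iic a := by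
    ext ω
    simp [Finset.sup'_le_iff]
  rw [hset, hindep.meas_biInter fun i _ => ⟨Iic a, measurableSet_Iic, rfl⟩]
  have hlaw : ∀ i, μ (W i ⁻¹' Iic a) = ν (Iic a) := fun i => by
    rw [← hid i, Measure.map_apply (hmeas i) measurableSet_Iic]
  simp only [hlaw, Finset.prod_const]

theorem stmt17_general (τ : ℝ) (hτ : 1 < τ) (t₀ : ℝ)
    (l : ℝ → ℝ) (hlpos : ∀ t : ℝ, t₀ ≤ t → 0 < l t)
    (hlsv : SlowlyVarying l)
    {Ω : Type*} [MeasurableSpace Ω] (μ : Measure Ω)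
    (W : ℕ → Ω → ℝ) (hmeas : ∀ i, Measurable (W i))
    (hindep : iIndepFun W μ)
    (ν : Measure ℝ) [IsProbabilityMeasure ν] (hid : ∀ i, Measure.map (W i) μ = ν)
    (htail : ∀ t : ℝ, t₀ ≤ t → ν (Set.Ioi t) = ENNReal.ofReal (l t * t ^ (-(τ - 1)))) :
    ∀ δ ∈ Set.Ioo (0 : ℝ) 1, ∃ N₀ : ℕ, ∀ N : ℕ, N₀ ≤ N → ∀ hN1 : 1 ≤ N,
      μ {ω | (Finset.Icc 1 N).sup' (Finset.nonempty_Icc.mpr hN1) (fun i => W i ω)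
            ≤ (N : ℝ) ^ ((1 - δ) / (τ - 1))}
        ≤ ENNReal.ofReal (Real.exp (-((N : ℝ) ^ (δ / 2)))) := by
  rintro δ ⟨hδ0, hδ1⟩
  have hτ1 : 0 < τ - 1 := sub_pos.2 hτ
  set α := (1 - δ) / (τ - 1) with hα_def
  have hα : 0 < α := div_pos (sub_pos.2 hδ1) hτ1
  have hFl : ∀ᶠ t in atTop, ν.real (Ioi t) = l t * t ^ (-(τ - 1)) := by
    filter_upwards [eventually_ge_atTop t₀, eventually_ge_atTop 0] with t ht ht0
    rw [measureReal_def, htail t ht,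
      ENNReal.toReal_ofReal (mul_nonneg (hlpos t ht).le (rpow_nonneg ht0 _))]
  obtain ⟨c, hc, hcF⟩ := hlsv.exists_mul_rpow_neg_le (eventually_atTop.2 ⟨t₀, hlpos⟩)
    (fun _ _ hst => measureReal_mono (Ioi_subset_Ioi hst)) hFl hτ1.le
    (ε := δ / (4 * α)) (by positivity)
  have hcast : Tendsto (fun N : ℕ => (N : ℝ)) atTop atTop := tendsto_natCast_atTop_atTop
  have hlarge : ∀ᶠ N : ℕ in atTop, (N : ℝ) ^ (δ / 2) ≤ N * ν.real (Ioi ((N : ℝ) ^ α)) := by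
    filter_upwards [((tendsto_rpow_atTop hα).comp hcast).eventually hcF,
      hcast.eventually (((tendsto_rpow_atTop (by positivity : 0 < δ / 4)).const_mul_atTop hc
        ).eventually_ge_atTop 1),
      hcast.eventually_gt_atTop 0] with N hcFN hcN hN0
    have hexp : α * -(τ - 1 + δ / (4 * α)) = δ / 4 + δ / 2 - 1 := by
      rw [hα_def]; field_simp; ring
    calc (N : ℝ) ^ (δ / 2) ≤ c * (N : ℝ) ^ (δ / 4) * (N : ℝ) ^ (δ / 2) :=
          le_mul_of_one_le_left (by positivity) hcN
      _ = N * (c * ((N : ℝ) ^ α) ^ (-(τ - 1 + δ / (4 * α)))) := by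
          rw [← rpow_mul hN0.le, hexp, rpow_sub hN0, rpow_add hN0, rpow_one]
          field_simp
      _ ≤ N * ν.real (Ioi ((N : ℝ) ^ α)) := by gcongr; exact hcFN
  obtain ⟨N₀, hN₀⟩ := eventually_atTop.1 hlarge
  refine ⟨N₀, fun N hN hN1 => ?_⟩
  rw [hindep.measure_sup'_le hmeas hid, Nat.card_Icc, Nat.add_sub_cancel, ← compl_Ioi]
  calc _ ≤ ENNReal.ofReal (exp (-(N * ν.real (Ioi ((N : ℝ) ^ α))))) :=
        measure_compl_pow_le_exp measurableSet_Ioi N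
    _ ≤ _ := ENNReal.ofReal_le_ofReal (exp_le_exp.2 (neg_le_neg (hN₀ N hN)))

/-- **(5.14).** For i.i.d. `W_i` with `P(W_1 > t) = ℓ(t) t^{-(τ-1)}` for `t ≥ t₀`, `ℓ`
slowly varying, and every `δ ∈ (0,1)`, there is `N₀` such that for all `N ≥ N₀`:
`P(max_{1≤i≤N} W_i ≤ N^{(1-δ)/(τ-1)}) ≤ exp(-N^{δ/2})`. -/
theorem stmt17 (τ : ℝ) (hτ : 1 < τ) (t₀ : ℝ) (ht₀ : 1 ≤ t₀)
    (l : ℝ → ℝ) (hlmeas : Measurable l) (hlpos : ∀ t : ℝ, t₀ ≤ t → 0 < l t)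
    (hlsv : SlowlyVarying l)
    {Ω : Type*} [MeasurableSpace Ω] (μ : Measure Ω) [IsProbabilityMeasure μ]
    (W : ℕ → Ω → ℝ) (hmeas : ∀ i, Measurable (W i))
    (hindep : iIndepFun W μ)
    (ν : Measure ℝ) [IsProbabilityMeasure ν] (hid : ∀ i, Measure.map (W i) μ = ν)
    (htail : ∀ t : ℝ, t₀ ≤ t → ν (Set.Ioi t) = ENNReal.ofReal (l t * t ^ (-(τ - 1)))) :
    ∀ δ ∈ Set.Ioo (0 : ℝ) 1, ∃ N₀ : ℕ, ∀ N : ℕ, N₀ ≤ N → ∀ hN1 : 1 ≤ N,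
      μ {ω | (Finset.Icc 1 N).sup' (Finset.nonempty_Icc.mpr hN1) (fun i => W i ω)
            ≤ (N : ℝ) ^ ((1 - δ) / (τ - 1))}
        ≤ ENNReal.ofReal (Real.exp (-((N : ℝ) ^ (δ / 2)))) :=
  stmt17_general τ hτ t₀ l hlpos hlsv μ W hmeas hindep ν hid htail
end
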